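/- Let 𝔠 be a coherator for n-categories and p : E → B a fibration in Mod(𝔠^W). Then p has the right lifting property with respect to the set of target maps {τ_k : D_k → D_{k+1}, k ≥ 0}. -/

import Mathlib

open CategoryTheory Opposite

namespace GPaper

/-! ## The globe category and its truncations

The globe category `𝔾` is the quotient of the free category on the graph with two arrows
`σ_k, τ_k : k → k+1` by the coglobular relations `σ∘σ = τ∘σ`, `σ∘τ = τ∘τ`.  Concretely, a
non-identity morphism `m ⟶ p` (for `m < p`) is uniquely determined by whether its first letter
is a cosource (`false`) or a cotarget (`true`); we use this normal form as the definition. -/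

inductive GlobHom : ℕ → ℕ → Type where
  | id (m : ℕ) : GlobHom m m
  | gen (b : Bool) {m p : ℕ} (h : m < p) : GlobHom m p

def GlobHom.comp : ∀ {m p q : ℕ}, GlobHom m p → GlobHom p q → GlobHom m q
  | _, _, _, .id _, g => g
  | _, _, _, f, .id _ => f
  | _, _, _, .gen b h, .gen _ h' => .gen b (h.trans h')

/-- Objects of the `n`-truncated globe category `𝔾_n` (`n = ⊤` gives the full globe category). -/
structure Gle (n : ℕ∞) where
  val : ℕ
  isLe : (val : ℕ∞) ≤ n

theorem Gle.ext' {n : ℕ∞} {a b : Gle n} (h : a.val = b.val) : a = b := by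
  cases a; cases b; cases h; rfl

theorem GlobHom.id_comp' : ∀ {m p : ℕ} (f : GlobHom m p), (GlobHom.id m).comp f = f := by
  intro m p f; cases f <;> rfl

theorem GlobHom.comp_id' : ∀ {m p : ℕ} (f : GlobHom m p), f.comp (GlobHom.id p) = f := by
  intro m p f; cases f <;> rfl

theorem GlobHom.assoc' : ∀ {m p q r : ℕ} (f : GlobHom m p) (g : GlobHom p q) (h : GlobHom q r),
    (f.comp g).comp h = f.comp (g.comp h) := by
  intro m p q r f g h; cases f <;> cases g <;> cases h <;> rfl

instance (n : ℕ∞) : Category (Gle n) where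
  Hom a b := GlobHom a.val b.val
  id a := GlobHom.id a.val
  comp f g := f.comp g
  id_comp f := GlobHom.id_comp' f
  comp_id f := GlobHom.comp_id' f
  assoc f g h := GlobHom.assoc' f g h

variable {n : ℕ∞}

/-- The cosource map `σ : a → b`. -/
def sg {a b : Gle n} (h : a.val < b.val) : a ⟶ b := GlobHom.gen false h
/-- The cotarget map `τ : a → b`. -/
def tg {a b : Gle n} (h : a.val < b.val) : a ⟶ b := GlobHom.gen true h
/-- The cosource map, or the identity if the dimensions agree. -/
def sge {a b : Gle n} (h : a.val ≤ b.val) : a ⟶ b :=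
  if e : a.val = b.val then eqToHom (Gle.ext' e) else sg (lt_of_le_of_ne h e)
/-- The cotarget map, or the identity if the dimensions agree. -/
def tge {a b : Gle n} (h : a.val ≤ b.val) : a ⟶ b :=
  if e : a.val = b.val then eqToHom (Gle.ext' e) else tg (lt_of_le_of_ne h e)

/-- `k` is an allowed dimension for the truncation parameter `n`. -/
def inR (n : ℕ∞) (k : ℕ) : Prop := (k : ℕ∞) ≤ n

/-! ## Tables of dimensions

A table of dimensions `(i₁, …, i_q ; i'₁, …, i'_{q-1})` with `i'_k < i_k`, `i'_k < i_{k+1}`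
is stored as the first top entry together with a list of pairs (separator, next top entry). -/

def TV (n : ℕ∞) : ℕ → List (ℕ × ℕ) → Prop
  | h, [] => inR n h
  | h, (i', j) :: l => inR n h ∧ i' < h ∧ i' < j ∧ TV n j l

theorem TV.headLe : ∀ {h : ℕ} {l : List (ℕ × ℕ)}, TV n h l → inR n h
  | _, [], v => v
  | _, (_, _) :: _, v => v.1

theorem TV.midLe {h i' j : ℕ} {l : List (ℕ × ℕ)} (v : TV n h ((i', j) :: l)) : inR n i' :=
  le_trans (Nat.cast_le.mpr (le_of_lt v.2.1)) v.1

/-- A table of dimensions, with all entries bounded by `n`. -/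
structure DimTable (n : ℕ∞) where
  head : ℕ
  rest : List (ℕ × ℕ)
  valid : TV n head rest

def maxL (l : List (ℕ × ℕ)) : ℕ := l.foldr (fun p a => max p.2 a) 0

/-- The dimension of a table: the maximum of its top entries. -/
def DimTable.dim (T : DimTable n) : ℕ := max T.head (maxL T.rest)

/-! ## Families indexed by the zig-zag of a table -/

/-- A family of points, one for each top entry of a table. -/
def Pts (P : Gle n → Type) : ∀ (h : ℕ) (l : List (ℕ × ℕ)), TV n h l → Type
  | h, [], v => P ⟨h, v⟩
  | h, (_, j) :: l, v => P ⟨h, v.1⟩ × Pts P j l v.2.2.2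

def Pts.head {P : Gle n → Type} : ∀ {h l v}, Pts P h l v → P ⟨h, TV.headLe v⟩
  | _, [], _, x => x
  | _, _ :: _, _, x => x.1

def Pts.mapP {P Q : Gle n → Type} (φ : ∀ g : Gle n, P g → Q g) :
    ∀ {h l v}, Pts P h l v → Pts Q h l v
  | _, [], _, x => φ _ x
  | _, _ :: _, _, x => (φ _ x.1, Pts.mapP φ x.2)

def Pts.setHead {P : Gle n → Type} : ∀ {h l v}, Pts P h l v → P ⟨h, TV.headLe v⟩ → Pts P h l v
  | _, [], _, _, y => y
  | _, _ :: _, _, x, y => (y, x.2)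

def Pts.toSet {P : Gle n → Type} : ∀ {h l v}, Pts P h l v → Set (Σ g : Gle n, P g)
  | h, [], v, x => {⟨⟨h, v⟩, x⟩}
  | h, _ :: _, v, x => insert ⟨⟨h, v.1⟩, x.1⟩ (Pts.toSet x.2)

/-- Compatibility of a family with the zig-zag maps of the table, relative to a pair of
"restriction along σ" and "restriction along τ" operations. -/
def PtsOk {P : Gle n → Type} (rS rT : ∀ (a b : Gle n), a.val < b.val → P b → P a) :
    ∀ {h l v}, Pts P h l v → Prop
  | _, [], _, _ => True
  | h, (i', j) :: l, v, x =>
      rS ⟨i', TV.midLe v⟩ ⟨h, v.1⟩ v.2.1 x.1 =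
        rT ⟨i', TV.midLe v⟩ ⟨j, TV.headLe v.2.2.2⟩ v.2.2.1 (Pts.head x.2) ∧
      PtsOk rS rT x.2

theorem Pts.mapP_mapP {P Q R : Gle n → Type} (φ : ∀ g, P g → Q g) (ψ : ∀ g, Q g → R g) :
    ∀ {h l v} (x : Pts P h l v),
      Pts.mapP ψ (Pts.mapP φ x) = Pts.mapP (fun g a => ψ g (φ g a)) x
  | _, [], _, _ => rfl
  | _, _ :: _, _, x => by
      simp only [Pts.mapP]
      exact congrArg _ (Pts.mapP_mapP φ ψ x.2)

theorem Pts.mapP_ext {P Q : Gle n → Type} {φ ψ : ∀ g, P g → Q g}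
    (h : ∀ g a, φ g a = ψ g a) :
    ∀ {h' l v} (x : Pts P h' l v), Pts.mapP φ x = Pts.mapP ψ x
  | _, [], _, x => h _ x
  | _, _ :: _, _, x => by
      simp only [Pts.mapP]
      exact congrArg₂ _ (h _ x.1) (Pts.mapP_ext h x.2)
/-! ## Globular sums and globular theories

Following the skeletal description of `Θ₀` (objects = tables of dimensions), a globular
theory is a category equipped with a coglobular object, a chosen colimit cocone ("globular
sum") for the zig-zag diagram of every table, such that the resulting assignment
`table ↦ apex` is bijective on objects (this encodes a bijective-on-objects, globular sums
preserving functor out of `Θ₀`). -/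

/-- A cocone on the zig-zag of globes determined by a table `T`, with respect to a coglobular
object `G`. -/
structure SCone {C : Type*} [Category C] (G : Gle n ⥤ C) (T : DimTable n) where
  pt : C
  legs : Pts (fun g => G.obj g ⟶ pt) T.head T.rest T.valid
  ok : PtsOk (fun a b hab f => G.map (sg hab) ≫ f) (fun a b hab f => G.map (tg hab) ≫ f) legs

/-- Post-composition of the legs of a cocone with a morphism out of its apex. -/
def SCone.post {C : Type*} [Category C] {G : Gle n ⥤ C} {T : DimTable n} (c : SCone G T)
    {X : C} (u : c.pt ⟶ X) : Pts (fun g => G.obj g ⟶ X) T.head T.rest T.valid :=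
  Pts.mapP (fun _ f => f ≫ u) c.legs

/-- The cocone is a colimit of the zig-zag diagram. -/
def IsSColim {C : Type*} [Category C] {G : Gle n ⥤ C} {T : DimTable n} (c : SCone G T) : Prop :=
  ∀ (X : C) (fs : Pts (fun g => G.obj g ⟶ X) T.head T.rest T.valid),
    PtsOk (fun a b hab f => G.map (sg hab) ≫ f) (fun a b hab f => G.map (tg hab) ≫ f) fs →
    ∃! u : c.pt ⟶ X, c.post u = fs

/-- An `n`-globular theory. -/
structure GlobTheory (n : ℕ∞) : Type 2 where
  E : Type 1
  [cat : Category.{0} E]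
  G : Gle n ⥤ E
  sum : ∀ T : DimTable n, SCone G T
  isColim : ∀ T : DimTable n, IsSColim (sum T)
  obj_bij : Function.Bijective (fun T : DimTable n => (sum T).pt)

attribute [instance] GlobTheory.cat

/-- The globe `D_k` of the theory. -/
def GlobTheory.D (Th : GlobTheory n) (k : ℕ) (hk : inR n k) : Th.E := Th.G.obj ⟨k, hk⟩

/-! ## Models of a globular theory -/

/-- The set of `g`-cells of a presheaf on the theory. -/
def cellP (Th : GlobTheory n) (X : Th.Eᵒᵖ ⥤ Type) (g : Gle n) : Type := X.obj (op (Th.G.obj g))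

/-- Restriction along the cosource maps. -/
def resS (Th : GlobTheory n) (X : Th.Eᵒᵖ ⥤ Type) (a b : Gle n) (hab : a.val < b.val) :
    cellP Th X b → cellP Th X a := X.map (op (Th.G.map (sg hab)))

/-- Restriction along the cotarget maps. -/
def resT (Th : GlobTheory n) (X : Th.Eᵒᵖ ⥤ Type) (a b : Gle n) (hab : a.val < b.val) :
    cellP Th X b → cellP Th X a := X.map (op (Th.G.map (tg hab)))

/-- A presheaf on the theory is a model if it sends every globular sum to the corresponding
limit: compatible families of cells indexed by a table correspond bijectively to cells of
shape the globular sum of that table. -/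
def IsModel (Th : GlobTheory n) (X : Th.Eᵒᵖ ⥤ Type) : Prop :=
  ∀ T : DimTable n,
    ∀ fam : Pts (cellP Th X) T.head T.rest T.valid,
      PtsOk (resS Th X) (resT Th X) fam →
      ∃! y : X.obj (op (Th.sum T).pt),
        Pts.mapP (fun _ leg => X.map leg.op y) (Th.sum T).legs = fam

/-- The category of models of a globular theory. -/
def Mod (Th : GlobTheory n) := ObjectProperty.FullSubcategory (IsModel Th)

instance (Th : GlobTheory n) : Category (Mod Th) :=
  { Hom := fun X Y => X.obj ⟶ Y.obj, id := fun X => 𝟙 X.obj, comp := fun f g => f ≫ g }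

/-- Representable presheaves are models. -/
theorem isModel_yoneda (Th : GlobTheory n) (A : Th.E) : IsModel Th (yoneda.obj A) :=
  fun T fam hfam => Th.isColim T A fam hfam

/-- The representable model on an object of the theory. -/
def dModA (Th : GlobTheory n) (A : Th.E) : Mod Th := ⟨yoneda.obj A, isModel_yoneda Th A⟩

/-- The representable model `D_g` on a globe. -/
def dMod (Th : GlobTheory n) (g : Gle n) : Mod Th := dModA Th (Th.G.obj g)

/-- The source map `σ : D_j → D_k` of representable models. -/
def sgMod (Th : GlobTheory n) {a b : Gle n} (h : a.val < b.val) : dMod Th a ⟶ dMod Th b :=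
  yoneda.map (Th.G.map (sg h))

/-- The target map `τ : D_j → D_k` of representable models. -/
def tgMod (Th : GlobTheory n) {a b : Gle n} (h : a.val < b.val) : dMod Th a ⟶ dMod Th b :=
  yoneda.map (Th.G.map (tg h))

/-- The `g`-cells of a model. -/
def cl {Th : GlobTheory n} (X : Mod Th) (g : Gle n) : Type := cellP Th X.obj g

/-- Action of a morphism of models on cells. -/
def fapp {Th : GlobTheory n} {X Y : Mod Th} (f : X ⟶ Y) (g : Gle n) : cl X g → cl Y g :=
  f.app (op (Th.G.obj g))

/-- The (iterated) source of a cell. -/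
def csrc {Th : GlobTheory n} {X : Mod Th} {a b : Gle n} (h : a.val < b.val) :
    cl X b → cl X a := resS Th X.obj a b h

/-- The (iterated) target of a cell. -/
def ctgt {Th : GlobTheory n} {X : Mod Th} {a b : Gle n} (h : a.val < b.val) :
    cl X b → cl X a := resT Th X.obj a b h

/-- Two cells of the same dimension are parallel if their sources and targets agree
(vacuously true in dimension `0`). -/
def Par {Th : GlobTheory n} {X : Mod Th} {k : Gle n} (x y : cl X k) : Prop :=
  ∀ (j : Gle n) (hj : j.val + 1 = k.val),
    csrc (show j.val < k.val by omega) x = csrc (show j.val < k.val by omega) y ∧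
    ctgt (show j.val < k.val by omega) x = ctgt (show j.val < k.val by omega) y

/-! ## Lifting properties, (trivial) cofibrations and fibrations, weak equivalences -/

/-- Existence of diagonal fillers for all commutative squares with left leg `l`
and right leg `r`. -/
def SqLift {Th : GlobTheory n} {A B P Q : Mod Th} (l : A ⟶ B) (r : P ⟶ Q) : Prop :=
  ∀ (u : A ⟶ P) (v : B ⟶ Q), u ≫ r = l ≫ v → ∃ d : B ⟶ P, l ≫ d = u ∧ d ≫ r = v

/-- `f` is a trivial fibration: it has the right lifting property with respect to the set
`I` of boundary inclusions `S^{k-1} → D_k` (for `k ≤ n`), together with, for finite `n`,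
the collapse map `(1,1) : Sⁿ → Dⁿ`.  This is expressed elementwise via the universal
property of the sphere objects. -/
def InjI {Th : GlobTheory n} {X Y : Mod Th} (f : X ⟶ Y) : Prop :=
  (∀ g : Gle n, g.val = 0 → ∀ y : cl Y g, ∃ x : cl X g, fapp f g x = y) ∧
  (∀ (j k : Gle n) (hj : j.val + 1 = k.val) (a b : cl X j), Par a b →
     ∀ c : cl Y k, csrc (show j.val < k.val by omega) c = fapp f j a →
       ctgt (show j.val < k.val by omega) c = fapp f j b →
       ∃ e : cl X k, csrc (show j.val < k.val by omega) e = a ∧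
         ctgt (show j.val < k.val by omega) e = b ∧ fapp f k e = c) ∧
  (∀ k : Gle n, ¬ inR n (k.val + 1) → ∀ a b : cl X k, Par a b →
     fapp f k a = fapp f k b → a = b)

/-- `f` is a fibration: it has the right lifting property with respect to the set `J` of
source maps `σ_k : D_k → D_{k+1}`, expressed elementwise. -/
def InjJ {Th : GlobTheory n} {X Y : Mod Th} (f : X ⟶ Y) : Prop :=
  ∀ (j k : Gle n) (hj : j.val + 1 = k.val) (a : cl X j) (c : cl Y k),
    csrc (show j.val < k.val by omega) c = fapp f j a →
    ∃ e : cl X k, csrc (show j.val < k.val by omega) e = a ∧ fapp f k e = c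

/-- Right lifting property against the target maps `τ_k : D_k → D_{k+1}`, elementwise. -/
def InjJtau {Th : GlobTheory n} {X Y : Mod Th} (f : X ⟶ Y) : Prop :=
  ∀ (j k : Gle n) (hj : j.val + 1 = k.val) (a : cl X j) (c : cl Y k),
    ctgt (show j.val < k.val by omega) c = fapp f j a →
    ∃ e : cl X k, ctgt (show j.val < k.val by omega) e = a ∧ fapp f k e = c

/-- Cofibrations: maps with the left lifting property against all trivial fibrations. -/
def IsCofib {Th : GlobTheory n} {A B : Mod Th} (l : A ⟶ B) : Prop :=
  ∀ {P Q : Mod Th} (r : P ⟶ Q), InjI r → SqLift l r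

/-- Maps in the saturation of `J`: maps with the left lifting property against all
fibrations. -/
def IsTrivCofib {Th : GlobTheory n} {A B : Mod Th} (l : A ⟶ B) : Prop :=
  ∀ {P Q : Mod Th} (r : P ⟶ Q), InjJ r → SqLift l r

/-- An object is fibrant if the unique map to the terminal object is a fibration
(elementwise formulation). -/
def FibrantObj {Th : GlobTheory n} (X : Mod Th) : Prop :=
  ∀ (j k : Gle n) (hj : j.val + 1 = k.val) (a : cl X j),
    ∃ e : cl X k, csrc (show j.val < k.val by omega) e = a

/-- An object is contractible if the unique map to the terminal object is a trivial
fibration (elementwise formulation). -/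
def ContractibleObj {Th : GlobTheory n} (X : Mod Th) : Prop :=
  (∀ g : Gle n, g.val = 0 → Nonempty (cl X g)) ∧
  (∀ (j k : Gle n) (hj : j.val + 1 = k.val) (a b : cl X j), Par a b →
     ∃ e : cl X k, csrc (show j.val < k.val by omega) e = a ∧
       ctgt (show j.val < k.val by omega) e = b) ∧
  (∀ k : Gle n, ¬ inR n (k.val + 1) → ∀ a b : cl X k, Par a b → a = b)

/-- The class `W` of weak equivalences: `f : X → Y` is in `W` when every commutative
square from a boundary inclusion `S^{k-1} → D_k` to `f` admits a lift of the top which is a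
lift up to homotopy of the bottom (expressed elementwise; at the top dimension, for finite
`n`, "up to homotopy" means equality). -/
def WHtpy {Th : GlobTheory n} {X Y : Mod Th} (f : X ⟶ Y) {k : Gle n}
    (e : cl X k) (c : cl Y k) : Prop :=
  (∀ (k' : Gle n) (hk' : k.val + 1 = k'.val),
      ∃ H : cl Y k', csrc (show k.val < k'.val by omega) H = fapp f k e ∧
        ctgt (show k.val < k'.val by omega) H = c) ∧
  (inR n (k.val + 1) ∨ fapp f k e = c)

def IsWeq {Th : GlobTheory n} {X Y : Mod Th} (f : X ⟶ Y) : Prop :=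
  (∀ g : Gle n, g.val = 0 → ∀ c : cl Y g, ∃ e : cl X g, WHtpy f e c) ∧
  (∀ (j k : Gle n) (hj : j.val + 1 = k.val) (a b : cl X j), Par a b →
     ∀ c : cl Y k, csrc (show j.val < k.val by omega) c = fapp f j a →
       ctgt (show j.val < k.val by omega) c = fapp f j b →
       ∃ e : cl X k, csrc (show j.val < k.val by omega) e = a ∧
         ctgt (show j.val < k.val by omega) e = b ∧ WHtpy f e c)

/-- `f` is a retract of `g` in the arrow category. -/
def IsRetractOf {Th : GlobTheory n} {X Y W Z : Mod Th} (f : X ⟶ Y) (g : W ⟶ Z) : Prop :=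
  ∃ (a : X ⟶ W) (b : W ⟶ X) (c : Y ⟶ Z) (d : Z ⟶ Y),
    a ≫ b = 𝟙 X ∧ c ≫ d = 𝟙 Y ∧ a ≫ g = f ≫ c ∧ g ≫ d = b ≫ f

/-- The initial (empty) model. -/
def emptyMod (Th : GlobTheory n) : Mod Th :=
  ⟨(Functor.const _).obj PEmpty, fun _ fam _ => PEmpty.elim (Pts.head fam)⟩

/-- The unique map out of the empty model. -/
def emptyTo {Th : GlobTheory n} (X : Mod Th) : emptyMod Th ⟶ X where
  app _ := TypeCat.ofHom fun x => PEmpty.elim x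
  naturality := by intro Z Z' h; ext x; exact PEmpty.elim x

/-- An object is cofibrant if the map from the initial model is a cofibration. -/
def CofObj {Th : GlobTheory n} (X : Mod Th) : Prop := IsCofib (emptyTo X)

/-- The path-object datum used in the recognition theorem: a fibration `PX → X × X`
whose composites with the two projections are trivial fibrations.  A map to a product is
given by its two components; the fibration condition for the induced map to the product is
expressed elementwise. -/
def PairFib {Th : GlobTheory n} {PX X : Mod Th} (e₀ e₁ : PX ⟶ X) : Prop :=
  ∀ (j k : Gle n) (hj : j.val + 1 = k.val) (a : cl PX j) (c₀ c₁ : cl X k),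
    csrc (show j.val < k.val by omega) c₀ = fapp e₀ j a →
    csrc (show j.val < k.val by omega) c₁ = fapp e₁ j a →
    ∃ e : cl PX k, csrc (show j.val < k.val by omega) e = a ∧
      fapp e₀ k e = c₀ ∧ fapp e₁ k e = c₁
/-! ## The semi-model structure package

The content of a cofibrantly generated semi-model structure (Fresse §12.1) with weak
equivalences `W`, generating cofibrations the boundary inclusions and generating trivial
cofibrations the source maps, in which every object is fibrant and globular sums are
contractible. -/

def SemiModelPackage (Th : GlobTheory n) : Prop :=
  -- two-out-of-three for the weak equivalences
  (∀ {X Y Z : Mod Th} (f : X ⟶ Y) (g : Y ⟶ Z), IsWeq f → IsWeq g → IsWeq (f ≫ g)) ∧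
  (∀ {X Y Z : Mod Th} (f : X ⟶ Y) (g : Y ⟶ Z), IsWeq g → IsWeq (f ≫ g) → IsWeq f) ∧
  (∀ {X Y Z : Mod Th} (f : X ⟶ Y) (g : Y ⟶ Z), IsWeq f → IsWeq (f ≫ g) → IsWeq g) ∧
  -- weak equivalences are closed under retracts
  (∀ {X Y W Z : Mod Th} (f : X ⟶ Y) (g : W ⟶ Z), IsRetractOf f g → IsWeq g → IsWeq f) ∧
  -- trivial fibrations are exactly the fibrations which are weak equivalences
  (∀ {X Y : Mod Th} (f : X ⟶ Y), InjI f ↔ InjJ f ∧ IsWeq f) ∧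
  -- (cofibration, trivial fibration) factorizations
  (∀ {X Y : Mod Th} (f : X ⟶ Y),
      ∃ (Z : Mod Th) (i : X ⟶ Z) (p : Z ⟶ Y), IsCofib i ∧ InjI p ∧ i ≫ p = f) ∧
  -- (trivial cofibration, fibration) factorizations for maps with cofibrant domain
  (∀ {X Y : Mod Th} (f : X ⟶ Y), CofObj X →
      ∃ (Z : Mod Th) (i : X ⟶ Z) (p : Z ⟶ Y), IsCofib i ∧ IsWeq i ∧ InjJ p ∧ i ≫ p = f) ∧
  -- trivial cofibrations with cofibrant domain lift against fibrations
  (∀ {X Y : Mod Th} (i : X ⟶ Y), CofObj X → IsCofib i → IsWeq i →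
      ∀ {P Q : Mod Th} (p : P ⟶ Q), InjJ p → SqLift i p) ∧
  -- every object is fibrant
  (∀ X : Mod Th, FibrantObj X) ∧
  -- globular sums are contractible
  (∀ A : Th.E, ContractibleObj (dModA Th A))

/-! ## The boundary of a globular sum

For a table `T` of dimension `m > 0`, the boundary table is obtained by replacing every top
entry equal to `m` by `m - 1`, and collapsing the degenerate stretches so created (runs of
`m`'s separated by `m - 1`'s collapse to a single `m - 1`). -/

def bH (m h : ℕ) : ℕ := min h (m - 1)

def bL (m : ℕ) : List (ℕ × ℕ) → List (ℕ × ℕ)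
  | [] => []
  | (i', j) :: l => if i' = m - 1 then bL m l else (i', bH m j) :: bL m l

def Bnd (m : ℕ) (l : List (ℕ × ℕ)) : Prop := ∀ p ∈ l, p.2 ≤ m

theorem le_maxL : ∀ (l : List (ℕ × ℕ)), ∀ p ∈ l, p.2 ≤ maxL l := by
  intro l
  induction l with
  | nil => intro p hp; simp at hp
  | cons q l ih =>
    intro p hp
    rcases List.mem_cons.mp hp with h | h
    · subst h; simp [maxL]
    · calc p.2 ≤ maxL l := ih p h
        _ ≤ maxL (q :: l) := by simp [maxL]

theorem head_le_dim (T : DimTable n) : T.head ≤ T.dim := le_max_left _ _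

theorem bnd_dim (T : DimTable n) : Bnd T.dim T.rest := fun p hp =>
  le_trans (le_maxL T.rest p hp) (le_max_right _ _)

theorem tv_bdry (m : ℕ) :
    ∀ (h : ℕ) (l : List (ℕ × ℕ)), TV n h l → h ≤ m → Bnd m l → TV n (bH m h) (bL m l) := by
  intro h l
  induction l generalizing h with
  | nil =>
    intro v hh _
    exact le_trans (Nat.cast_le.mpr (min_le_left h (m - 1))) v
  | cons p l ih =>
    obtain ⟨i', j⟩ := p
    intro v hh hb
    by_cases hd : i' = m - 1
    · have hbl : bL m ((i', j) :: l) = bL m l := by simp [bL, hd]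
      have hm : h = m := by have h1 := v.2.1; omega
      have hjm : j = m := by
        have h1 := v.2.2.1
        have h2 := hb (i', j) List.mem_cons_self
        simp at h2
        omega
      rw [hbl, show bH m h = bH m j by rw [hm, hjm]]
      exact ih j v.2.2.2 (by omega) (fun p hp => hb p (List.mem_cons_of_mem _ hp))
    · have hbl : bL m ((i', j) :: l) = (i', bH m j) :: bL m l := by simp [bL, hd]
      rw [hbl]
      have h1 := v.2.1
      have h2 := v.2.2.1
      have h3 := hb (i', j) List.mem_cons_self
      simp at h3
      refine ⟨le_trans (Nat.cast_le.mpr (min_le_left h (m - 1))) v.1, ?_, ?_, ?_⟩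
      · simp only [bH]; omega
      · simp only [bH]; omega
      · exact ih j v.2.2.2 (by omega) (fun p hp => hb p (List.mem_cons_of_mem _ hp))

/-- The boundary table of a table. -/
def DimTable.bdry (T : DimTable n) : DimTable n :=
  ⟨bH T.dim T.head, bL T.dim T.rest,
    tv_bdry T.dim T.head T.rest T.valid (head_le_dim T) (bnd_dim T)⟩

section BdryLegs

variable {C : Type*} [Category C] (G : Gle n ⥤ C) (X : C)

/-- Transport of legs along an equality of head dimensions. -/
def legsCast {h h' : ℕ} (e : h = h') {l : List (ℕ × ℕ)} {v : TV n h l} {v' : TV n h' l}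
    (L : Pts (fun g => G.obj g ⟶ X) h' l v') : Pts (fun g => G.obj g ⟶ X) h l v := by
  subst e; exact L

/-- The legs of the cocone exhibiting the source-boundary map `∂_σ : ∂A → A`: on each
component of the boundary, it is given by (capped) cosource maps into the *first* component
of the corresponding run of top-dimensional components of `A`. -/
def srcLegs (m : ℕ) :
    ∀ (h : ℕ) (l : List (ℕ × ℕ)) (v : TV n h l), h ≤ m → Bnd m l →
      ∀ v' : TV n (bH m h) (bL m l),
        Pts (fun g => G.obj g ⟶ X) h l v → Pts (fun g => G.obj g ⟶ X) (bH m h) (bL m l) v' := by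
  intro h l
  induction l generalizing h with
  | nil =>
    intro v hh hb v' f
    exact G.map (sge (a := ⟨bH m h, v'⟩) (b := ⟨h, v⟩) (min_le_left _ _)) ≫ f
  | cons p l ih =>
    obtain ⟨i', j⟩ := p
    intro v hh hb v' fs
    by_cases hd : i' = m - 1
    · have hm : h = m := by have h1 := v.2.1; omega
      have hjm : j = m := by
        have h1 := v.2.2.1
        have h2 := hb (i', j) List.mem_cons_self
        simp at h2
        omega
      have hbl : bL m ((i', j) :: l) = bL m l := by simp [bL, hd]
      have hhj : bH m h = bH m j := by rw [hm, hjm]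
      revert v'
      rw [hbl, hhj]
      intro v'
      exact Pts.setHead (ih j v.2.2.2 (le_of_eq hjm) (fun p hp => hb p (List.mem_cons_of_mem _ hp)) v' fs.2)
        (G.map (sge (a := ⟨bH m j, TV.headLe v'⟩) (b := ⟨h, v.1⟩)
          (show bH m j ≤ h from hhj ▸ min_le_left h (m - 1))) ≫ fs.1)
    · have hbl : bL m ((i', j) :: l) = (i', bH m j) :: bL m l := by simp [bL, hd]
      have h3 := hb (i', j) List.mem_cons_self
      simp at h3
      revert v'
      rw [hbl]
      intro v' 
      exact ⟨G.map (sge (a := ⟨bH m h, v'.1⟩) (b := ⟨h, v.1⟩) (min_le_left _ _)) ≫ fs.1,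
        ih j v.2.2.2 (by omega) (fun p hp => hb p (List.mem_cons_of_mem _ hp)) v'.2.2.2 fs.2⟩

/-- The legs of the cocone exhibiting the target-boundary map `∂_τ : ∂A → A`: given by
(capped) cotarget maps into the *last* component of the corresponding run. -/
def tgtLegs (m : ℕ) :
    ∀ (h : ℕ) (l : List (ℕ × ℕ)) (v : TV n h l), h ≤ m → Bnd m l →
      ∀ v' : TV n (bH m h) (bL m l),
        Pts (fun g => G.obj g ⟶ X) h l v → Pts (fun g => G.obj g ⟶ X) (bH m h) (bL m l) v' := by
  intro h l
  induction l generalizing h with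
  | nil =>
    intro v hh hb v' f
    exact G.map (tge (a := ⟨bH m h, v'⟩) (b := ⟨h, v⟩) (min_le_left _ _)) ≫ f
  | cons p l ih =>
    obtain ⟨i', j⟩ := p
    intro v hh hb v' fs
    by_cases hd : i' = m - 1
    · have hm : h = m := by have h1 := v.2.1; omega
      have hjm : j = m := by
        have h1 := v.2.2.1
        have h2 := hb (i', j) List.mem_cons_self
        simp at h2
        omega
      have hbl : bL m ((i', j) :: l) = bL m l := by simp [bL, hd]
      have hhj : bH m h = bH m j := by rw [hm, hjm]
      revert v'
      rw [hbl, hhj]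
      intro v'
      exact ih j v.2.2.2 (le_of_eq hjm) (fun p hp => hb p (List.mem_cons_of_mem _ hp)) v' fs.2
    · have hbl : bL m ((i', j) :: l) = (i', bH m j) :: bL m l := by simp [bL, hd]
      have h3 := hb (i', j) List.mem_cons_self
      simp at h3
      revert v'
      rw [hbl]
      intro v'
      exact ⟨G.map (tge (a := ⟨bH m h, v'.1⟩) (b := ⟨h, v.1⟩) (min_le_left _ _)) ≫ fs.1,
        ih j v.2.2.2 (by omega) (fun p hp => hb p (List.mem_cons_of_mem _ hp)) v'.2.2.2 fs.2⟩

end BdryLegs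

/-- The canonical σ-boundary cocone legs (on the boundary table) with values in a globular
sum. -/
def bdrySrcLegs (Th : GlobTheory n) (T : DimTable n) :
    Pts (fun g => Th.G.obj g ⟶ (Th.sum T).pt) T.bdry.head T.bdry.rest T.bdry.valid :=
  srcLegs Th.G (Th.sum T).pt T.dim T.head T.rest T.valid (head_le_dim T) (bnd_dim T)
    T.bdry.valid (Th.sum T).legs

def bdryTgtLegs (Th : GlobTheory n) (T : DimTable n) :
    Pts (fun g => Th.G.obj g ⟶ (Th.sum T).pt) T.bdry.head T.bdry.rest T.bdry.valid :=
  tgtLegs Th.G (Th.sum T).pt T.dim T.head T.rest T.valid (head_le_dim T) (bnd_dim T)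
    T.bdry.valid (Th.sum T).legs

/-- `p` is the boundary map `∂_σ : ∂A → A` induced by the cosource maps `σ`. -/
def IsBdrySrcMap (Th : GlobTheory n) (T : DimTable n)
    (p : (Th.sum T.bdry).pt ⟶ (Th.sum T).pt) : Prop :=
  (Th.sum T.bdry).post p = bdrySrcLegs Th T

/-- `p` is the boundary map `∂_τ : ∂A → A` induced by the cotarget maps `τ`. -/
def IsBdryTgtMap (Th : GlobTheory n) (T : DimTable n)
    (p : (Th.sum T.bdry).pt ⟶ (Th.sum T).pt) : Prop :=
  (Th.sum T.bdry).post p = bdryTgtLegs Th T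
/-! ## Morphisms of globular theories

A morphism of globular theories is a functor commuting strictly with the structural functors
from `Θ₀`, i.e. with the coglobular objects and with the chosen globular sums. -/

structure TheoryHom (A B : GlobTheory n) where
  H : A.E ⥤ B.E
  comm : A.G ⋙ H = B.G
  sum_obj : ∀ T : DimTable n, H.obj (A.sum T).pt = (B.sum T).pt
  sum_legs : ∀ T : DimTable n,
    Pts.mapP (fun _ (f : _ ⟶ (A.sum T).pt) => H.map f) (A.sum T).legs =
    Pts.mapP (fun g (f : B.G.obj g ⟶ (B.sum T).pt) =>
        eqToHom (Functor.congr_obj comm g) ≫ f ≫ eqToHom (sum_obj T).symm) (B.sum T).legs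

def TheoryHom.comp {A B C : GlobTheory n} (φ : TheoryHom A B) (ψ : TheoryHom B C) :
    TheoryHom A C where
  H := φ.H ⋙ ψ.H
  comm := by rw [← Functor.assoc, φ.comm, ψ.comm]
  sum_obj T := by
    show ψ.H.obj (φ.H.obj (A.sum T).pt) = _
    rw [φ.sum_obj T, ψ.sum_obj T]
  sum_legs T := by
    have e1 := congrArg (Pts.mapP (fun _ (f : _ ⟶ φ.H.obj (A.sum T).pt) => ψ.H.map f))
      (φ.sum_legs T)
    simp only [Pts.mapP_mapP] at e1
    have e2 := congrArg (Pts.mapP (fun g (f : ψ.H.obj (B.G.obj g) ⟶ ψ.H.obj (B.sum T).pt) =>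
        eqToHom (show ψ.H.obj (φ.H.obj (A.G.obj g)) = ψ.H.obj (B.G.obj g) from
          congrArg ψ.H.obj (Functor.congr_obj φ.comm g)) ≫ f ≫
        eqToHom (congrArg ψ.H.obj (φ.sum_obj T)).symm)) (ψ.sum_legs T)
    simp only [Pts.mapP_mapP] at e2
    exact e1.trans ((Pts.mapP_ext (fun g a => by simp [eqToHom_map]) _).trans
      (e2.trans (Pts.mapP_ext (fun g a => by simp) _)))

/-- Θ₀ is, up to isomorphism, the initial globular theory. -/
def IsInitialTheory (A : GlobTheory n) : Prop :=
  ∀ B : GlobTheory n, Nonempty (TheoryHom A B) ∧ ∀ f g : TheoryHom A B, f = g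

/-- A pair of operations `f, g : D_k → A` in a theory. -/
structure PairOver (Th : GlobTheory n) where
  k : Gle n
  A : Th.E
  f : Th.G.obj k ⟶ A
  g : Th.G.obj k ⟶ A

/-- The pair is parallel: either `k = 0`, or the two maps agree after precomposition with
the cosource and the cotarget. -/
def PairOver.Parallel {Th : GlobTheory n} (p : PairOver Th) : Prop :=
  ∀ (j : Gle n) (hj : j.val + 1 = p.k.val),
    Th.G.map (sg (show j.val < p.k.val by omega)) ≫ p.f =
      Th.G.map (sg (show j.val < p.k.val by omega)) ≫ p.g ∧
    Th.G.map (tg (show j.val < p.k.val by omega)) ≫ p.f =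
      Th.G.map (tg (show j.val < p.k.val by omega)) ≫ p.g

/-- Transport of a pair along a theory morphism. -/
def TheoryHom.mapPair {A B : GlobTheory n} (φ : TheoryHom A B) (p : PairOver A) :
    PairOver B where
  k := p.k
  A := φ.H.obj p.A
  f := eqToHom (Functor.congr_obj φ.comm p.k).symm ≫ φ.H.map p.f
  g := eqToHom (Functor.congr_obj φ.comm p.k).symm ≫ φ.H.map p.g

/-- A filler (lift) of a parallel pair. -/
structure Filler {Th : GlobTheory n} (p : PairOver Th) (k' : Gle n)
    (hk' : p.k.val + 1 = k'.val) where
  h : Th.G.obj k' ⟶ p.A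
  hs : Th.G.map (sg (show p.k.val < k'.val by omega)) ≫ h = p.f
  ht : Th.G.map (tg (show p.k.val < k'.val by omega)) ≫ h = p.g

/-- `φ : A → A'` exhibits `A'` as the theory obtained from `A` by freely adjoining fillers
for the pairs in `X` (of non-maximal dimension) and equalizing the pairs of `X` of top
dimension (Prop. "universal property of globular theories"). -/
def IsFreeExt {A A' : GlobTheory n} (φ : TheoryHom A A') (X : Set (PairOver A)) : Prop :=
  (∀ p ∈ X, ¬ inR n (p.k.val + 1) → (φ.mapPair p).f = (φ.mapPair p).g) ∧
  ∃ hat : ∀ p ∈ X, ∀ (k' : Gle n) (hk' : p.k.val + 1 = k'.val), Filler (φ.mapPair p) k' hk',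
    ∀ (D : GlobTheory n) (F₀ : TheoryHom A D),
      (∀ p ∈ X, ¬ inR n (p.k.val + 1) → (F₀.mapPair p).f = (F₀.mapPair p).g) →
      ∀ ch : ∀ p ∈ X, ∀ (k' : Gle n) (hk' : p.k.val + 1 = k'.val), Filler (F₀.mapPair p) k' hk',
        ∃! H : TheoryHom A' D, φ.comp H = F₀ ∧
          ∀ (p : PairOver A) (hp : p ∈ X) (k' : Gle n) (hk' : p.k.val + 1 = k'.val),
            HEq (H.H.map (hat p hp k' hk').h) ((ch p hp k' hk').h)

/-- `Th` is the colimit of the tower `Tw` in the category of globular theories. -/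
def IsTowerColimit (Tw : ℕ → GlobTheory n) (st : ∀ m, TheoryHom (Tw m) (Tw (m + 1)))
    (Th : GlobTheory n) : Prop :=
  ∃ coc : ∀ m, TheoryHom (Tw m) Th,
    (∀ m, (st m).comp (coc (m + 1)) = coc m) ∧
    ∀ (B : GlobTheory n) (d : ∀ m, TheoryHom (Tw m) B),
      (∀ m, (st m).comp (d (m + 1)) = d m) →
      ∃! K : TheoryHom Th B, ∀ m, (coc m).comp K = d m

/-- Cellularity of a globular theory with respect to a notion of admissible pairs:
`Th` is the colimit of a tower starting at `Θ₀` in which each stage is freely generated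
over the previous one by fillers for a family of admissible pairs. -/
def CellularTheory (adm : ∀ Th' : GlobTheory n, PairOver Th' → Prop)
    (Th : GlobTheory n) : Prop :=
  ∃ (Tw : ℕ → GlobTheory n) (st : ∀ m, TheoryHom (Tw m) (Tw (m + 1))),
    IsInitialTheory (Tw 0) ∧
    (∀ m, ∃ X : Set (PairOver (Tw m)),
        (∀ p ∈ X, p.Parallel ∧ adm (Tw m) p) ∧ IsFreeExt (st m) X) ∧
    IsTowerColimit Tw st Th

/-- Contractibility of a globular theory with respect to a notion of admissible pairs:
every admissible parallel pair of non-maximal dimension has a filler, and admissible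
parallel pairs of maximal dimension are equal. -/
def ContractibleTheory (adm : ∀ Th' : GlobTheory n, PairOver Th' → Prop)
    (Th : GlobTheory n) : Prop :=
  ∀ p : PairOver Th, p.Parallel → adm Th p →
    (∀ (k' : Gle n) (hk' : p.k.val + 1 = k'.val), Nonempty (Filler p k' hk')) ∧
    (¬ inR n (p.k.val + 1) → p.f = p.g)

/-- `dim A ≤ d`, expressed via the (unique) table presenting `A`. -/
def DimLeObj (Th : GlobTheory n) (A : Th.E) (d : ℕ) : Prop :=
  ∀ T : DimTable n, (Th.sum T).pt = A → T.dim ≤ d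

/-- Admissible pairs in the groupoidal sense: `dim A ≤ k + 1`. -/
def AdmGpd (Th : GlobTheory n) (p : PairOver Th) : Prop :=
  DimLeObj Th p.A (p.k.val + 1)

/-- A coherator for `n`-groupoids: a contractible and cellular `n`-globular theory (with
respect to groupoid-admissible pairs). -/
def IsGpdCoherator (Th : GlobTheory n) : Prop :=
  ContractibleTheory AdmGpd Th ∧ CellularTheory AdmGpd Th
/-! ## Homogeneous maps and coherators for `n`-categories -/

/-- The globular maps of a theory: the image of `Θ₀`, i.e. the smallest class of maps
containing the identities, the coglobular maps and the cocone inclusions of the globular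
sums, and closed under composition and under the induction of maps out of globular sums. -/
inductive IsGlobularMap (Th : GlobTheory n) : ∀ {A B : Th.E}, (A ⟶ B) → Prop where
  | id (A : Th.E) : IsGlobularMap Th (𝟙 A)
  | comp {A B C : Th.E} {f : A ⟶ B} {g : B ⟶ C} :
      IsGlobularMap Th f → IsGlobularMap Th g → IsGlobularMap Th (f ≫ g)
  | coglob {a b : Gle n} (f : a ⟶ b) : IsGlobularMap Th (Th.G.map f)
  | leg (T : DimTable n) (q : Σ g : Gle n, Th.G.obj g ⟶ (Th.sum T).pt)
      (hq : q ∈ Pts.toSet (Th.sum T).legs) : IsGlobularMap Th q.2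
  | induced (T : DimTable n) {B : Th.E}
      (fs : Pts (fun g => Th.G.obj g ⟶ B) T.head T.rest T.valid)
      (hok : PtsOk (fun a b hab f => Th.G.map (sg hab) ≫ f)
        (fun a b hab f => Th.G.map (tg hab) ≫ f) fs)
      (hg : ∀ q ∈ Pts.toSet fs, IsGlobularMap Th q.2)
      (f : (Th.sum T).pt ⟶ B) (hf : (Th.sum T).post f = fs) :
      IsGlobularMap Th f

/-- `f` is homogeneous: in every factorization `f = f' ≫ g` with `g` globular, `g` is an
identity. -/
def IsHomog (Th : GlobTheory n) {A B : Th.E} (f : A ⟶ B) : Prop :=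
  ∀ {M : Th.E} (f' : A ⟶ M) (g : M ⟶ B), f = f' ≫ g → IsGlobularMap Th g →
    ∃ e : M = B, g = eqToHom e

/-- Admissible pairs for a theory of `n`-categories: `k = 0`, or both maps homogeneous, or
both factor through homogeneous maps into the boundary `∂A` along `∂_σ` resp. `∂_τ`. -/
def AdmCat (Th : GlobTheory n) (p : PairOver Th) : Prop :=
  p.k.val = 0 ∨ (IsHomog Th p.f ∧ IsHomog Th p.g) ∨
  ∃ (T : DimTable n) (hA : (Th.sum T).pt = p.A), 0 < T.dim ∧
    ∃ (pσ pτ : (Th.sum T.bdry).pt ⟶ (Th.sum T).pt),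
      IsBdrySrcMap Th T pσ ∧ IsBdryTgtMap Th T pτ ∧
      ∃ (f' g' : Th.G.obj p.k ⟶ (Th.sum T.bdry).pt),
        IsHomog Th f' ∧ IsHomog Th g' ∧
        p.f = f' ≫ pσ ≫ eqToHom hA ∧ p.g = g' ≫ pτ ≫ eqToHom hA

/-- Contractibility with *unique* fillers (with respect to categorically admissible pairs);
this characterizes the theory `Θ` of strict higher categories among globular theories. -/
def IsStrictThetaCat (Th : GlobTheory n) : Prop :=
  (∀ p : PairOver Th, p.Parallel → AdmCat Th p →
    (∀ (k' : Gle n) (hk' : p.k.val + 1 = k'.val),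
        ∃! h : Th.G.obj k' ⟶ p.A,
          Th.G.map (sg (show p.k.val < k'.val by omega)) ≫ h = p.f ∧
          Th.G.map (tg (show p.k.val < k'.val by omega)) ≫ h = p.g) ∧
    (¬ inR n (p.k.val + 1) → p.f = p.g)) ∧
  CellularTheory AdmCat Th

/-- The theory is homogeneous: it is equipped with a globular-sums preserving functor to the
theory of strict `n`-categories which detects homogeneous maps. -/
def HomogeneousStr (Th : GlobTheory n) : Prop :=
  ∃ (Θ' : GlobTheory n) (Hm : TheoryHom Th Θ'), IsStrictThetaCat Θ' ∧
    ∀ {A B : Th.E} (f : A ⟶ B), IsHomog Th f ↔ IsHomog Θ' (Hm.H.map f)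

/-- A coherator for `n`-categories: a contractible, cellular, homogeneous `n`-globular
theory with respect to categorically admissible pairs. -/
def IsCatCoherator (Th : GlobTheory n) : Prop :=
  HomogeneousStr Th ∧ ContractibleTheory AdmCat Th ∧ CellularTheory AdmCat Th

/-! ## `m`-bijective and `m`-fully faithful maps of models -/

/-- A morphism of models is `m`-bijective if it is bijective on `k`-cells for all `k ≤ m`. -/
def MBijMod {Th : GlobTheory n} (m : ℕ) {X Y : Mod Th} (f : X ⟶ Y) : Prop :=
  ∀ g : Gle n, g.val ≤ m → Function.Bijective (fapp f g)

/-- A morphism of models is `m`-fully faithful if for all `i ≥ m` the square of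
`(i+1)`-cells over pairs of parallel `i`-cells is cartesian (elementwise formulation). -/
def MFFMod {Th : GlobTheory n} (m : ℕ) {X Y : Mod Th} (f : X ⟶ Y) : Prop :=
  ∀ (j k : Gle n) (hj : j.val + 1 = k.val), m ≤ j.val →
    ∀ (y : cl Y k) (xs xt : cl X j),
      fapp f j xs = csrc (show j.val < k.val by omega) y →
      fapp f j xt = ctgt (show j.val < k.val by omega) y →
      ∃! x : cl X k, fapp f k x = y ∧ csrc (show j.val < k.val by omega) x = xs ∧
        ctgt (show j.val < k.val by omega) x = xt

/-! ## Systems of compositions, identities and inverses -/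

/-- The table presenting the globular sum `D_k ⨿_{D_{k-1}} D_k`. -/
def pairTab (k : ℕ) (h1 : 1 ≤ k) (hk : inR n k) : DimTable n :=
  ⟨k, [(k - 1, k)], ⟨hk, by omega, by omega, hk⟩⟩

/-- The globular sum `D_k ⨿_{D_{k-1}} D_k` in a theory. -/
def cPt (Th : GlobTheory n) (k : ℕ) (h1 : 1 ≤ k) (hk : inR n k) : Th.E :=
  (Th.sum (pairTab k h1 hk)).pt

/-- The cocone inclusion whose cosource face is glued. -/
def cInclS (Th : GlobTheory n) (k : ℕ) (h1 : 1 ≤ k) (hk : inR n k) :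
    Th.D k hk ⟶ cPt Th k h1 hk :=
  (Th.sum (pairTab k h1 hk)).legs.1

/-- The cocone inclusion whose cotarget face is glued. -/
def cInclT (Th : GlobTheory n) (k : ℕ) (h1 : 1 ≤ k) (hk : inR n k) :
    Th.D k hk ⟶ cPt Th k h1 hk :=
  (Th.sum (pairTab k h1 hk)).legs.2

/-- A system of compositions and a system of identities (with unit constraints) on a
globular theory; for finite `n` the unit constraints in dimension `n + 1` are equations. -/
structure SysCI (Th : GlobTheory n) where
  /-- binary compositions `c_k : D_k → D_k ⨿_{D_{k-1}} D_k`, `1 ≤ k ≤ n` -/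
  c : ∀ (k : ℕ) (h1 : 1 ≤ k) (hk : inR n k), Th.D k hk ⟶ cPt Th k h1 hk
  c_s : ∀ (k : ℕ) (h1 : 1 ≤ k) (hk : inR n k) (j : ℕ) (hj : j + 1 = k) (hjn : inR n j),
    Th.G.map (sg (a := ⟨j, hjn⟩) (b := ⟨k, hk⟩) (show j < k by omega)) ≫ c k h1 hk =
      Th.G.map (sg (a := ⟨j, hjn⟩) (b := ⟨k, hk⟩) (show j < k by omega)) ≫ cInclT Th k h1 hk
  c_t : ∀ (k : ℕ) (h1 : 1 ≤ k) (hk : inR n k) (j : ℕ) (hj : j + 1 = k) (hjn : inR n j),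
    Th.G.map (tg (a := ⟨j, hjn⟩) (b := ⟨k, hk⟩) (show j < k by omega)) ≫ c k h1 hk =
      Th.G.map (tg (a := ⟨j, hjn⟩) (b := ⟨k, hk⟩) (show j < k by omega)) ≫ cInclS Th k h1 hk
  /-- identities `id_k : D_{k+1} → D_k`, `0 ≤ k ≤ n - 1` -/
  idm : ∀ (k k' : ℕ) (hk' : k + 1 = k') (hn : inR n k') (hkn : inR n k),
    Th.D k' hn ⟶ Th.D k hkn
  idm_s : ∀ (k k' : ℕ) (hk' : k + 1 = k') (hn : inR n k') (hkn : inR n k),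
    Th.G.map (sg (a := ⟨k, hkn⟩) (b := ⟨k', hn⟩) (show k < k' by omega)) ≫ idm k k' hk' hn hkn = 𝟙 _
  idm_t : ∀ (k k' : ℕ) (hk' : k + 1 = k') (hn : inR n k') (hkn : inR n k),
    Th.G.map (tg (a := ⟨k, hkn⟩) (b := ⟨k', hn⟩) (show k < k' by omega)) ≫ idm k k' hk' hn hkn = 𝟙 _
  /-- left unit constraints `l_k : D_k → D_{k-1}`, `2 ≤ k ≤ n` -/
  lu : ∀ (i j k : ℕ) (hi : i + 1 = j) (hj : j + 1 = k) (hk : inR n k) (hjn : inR n j),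
    Th.D k hk ⟶ Th.D j hjn
  lu_s : ∀ (i j k : ℕ) (hi : i + 1 = j) (hj : j + 1 = k) (hk : inR n k) (hjn : inR n j),
    Th.G.map (sg (a := ⟨j, hjn⟩) (b := ⟨k, hk⟩) (show j < k by omega)) ≫ lu i j k hi hj hk hjn = 𝟙 _
  lu_t : ∀ (i j k : ℕ) (hi : i + 1 = j) (hj : j + 1 = k) (hk : inR n k) (hjn : inR n j)
      (hin : inR n i) (h1 : 1 ≤ j),
    ∃ u : cPt Th j h1 hjn ⟶ Th.D j hjn,
      cInclS Th j h1 hjn ≫ u =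
        idm i j hi hjn hin ≫ Th.G.map (tg (a := ⟨i, hin⟩) (b := ⟨j, hjn⟩) (show i < j by omega)) ∧
      cInclT Th j h1 hjn ≫ u = 𝟙 _ ∧
      Th.G.map (tg (a := ⟨j, hjn⟩) (b := ⟨k, hk⟩) (show j < k by omega)) ≫ lu i j k hi hj hk hjn =
        c j h1 hjn ≫ u
  /-- right unit constraints `r_k : D_k → D_{k-1}`, `2 ≤ k ≤ n` -/
  ru : ∀ (i j k : ℕ) (hi : i + 1 = j) (hj : j + 1 = k) (hk : inR n k) (hjn : inR n j),
    Th.D k hk ⟶ Th.D j hjn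
  ru_s : ∀ (i j k : ℕ) (hi : i + 1 = j) (hj : j + 1 = k) (hk : inR n k) (hjn : inR n j),
    Th.G.map (sg (a := ⟨j, hjn⟩) (b := ⟨k, hk⟩) (show j < k by omega)) ≫ ru i j k hi hj hk hjn = 𝟙 _
  ru_t : ∀ (i j k : ℕ) (hi : i + 1 = j) (hj : j + 1 = k) (hk : inR n k) (hjn : inR n j)
      (hin : inR n i) (h1 : 1 ≤ j),
    ∃ u : cPt Th j h1 hjn ⟶ Th.D j hjn,
      cInclS Th j h1 hjn ≫ u = 𝟙 _ ∧
      cInclT Th j h1 hjn ≫ u =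
        idm i j hi hjn hin ≫ Th.G.map (sg (a := ⟨i, hin⟩) (b := ⟨j, hjn⟩) (show i < j by omega)) ∧
      Th.G.map (tg (a := ⟨j, hjn⟩) (b := ⟨k, hk⟩) (show j < k by omega)) ≫ ru i j k hi hj hk hjn =
        c j h1 hjn ≫ u
  /-- the unit constraints in dimension `n + 1` (for finite `n`) become equations -/
  lu_top : ∀ (i j : ℕ) (hi : i + 1 = j) (hjn : inR n j) (hin : inR n i) (h1 : 1 ≤ j),
    ¬ inR n (j + 1) →
    ∃ u : cPt Th j h1 hjn ⟶ Th.D j hjn,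
      cInclS Th j h1 hjn ≫ u =
        idm i j hi hjn hin ≫ Th.G.map (tg (a := ⟨i, hin⟩) (b := ⟨j, hjn⟩) (show i < j by omega)) ∧
      cInclT Th j h1 hjn ≫ u = 𝟙 _ ∧
      𝟙 (Th.D j hjn) = c j h1 hjn ≫ u
  ru_top : ∀ (i j : ℕ) (hi : i + 1 = j) (hjn : inR n j) (hin : inR n i) (h1 : 1 ≤ j),
    ¬ inR n (j + 1) →
    ∃ u : cPt Th j h1 hjn ⟶ Th.D j hjn,
      cInclS Th j h1 hjn ≫ u = 𝟙 _ ∧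
      cInclT Th j h1 hjn ≫ u =
        idm i j hi hjn hin ≫ Th.G.map (sg (a := ⟨i, hin⟩) (b := ⟨j, hjn⟩) (show i < j by omega)) ∧
      𝟙 (Th.D j hjn) = c j h1 hjn ≫ u

/-- A system of left and right inverses relative to chosen systems of compositions and
identities. -/
structure SysInv (Th : GlobTheory n) (s : SysCI Th) where
  /-- left and right inverse operations `i^l_k, i^r_k : D_k → D_k`, exchanging source and
  target -/
  il : ∀ (k : ℕ) (h1 : 1 ≤ k) (hk : inR n k), Th.D k hk ⟶ Th.D k hk
  ir : ∀ (k : ℕ) (h1 : 1 ≤ k) (hk : inR n k), Th.D k hk ⟶ Th.D k hk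
  il_s : ∀ (k : ℕ) (h1 : 1 ≤ k) (hk : inR n k) (j : ℕ) (hj : j + 1 = k) (hjn : inR n j),
    Th.G.map (sg (a := ⟨j, hjn⟩) (b := ⟨k, hk⟩) (show j < k by omega)) ≫ il k h1 hk =
      Th.G.map (tg (a := ⟨j, hjn⟩) (b := ⟨k, hk⟩) (show j < k by omega))
  il_t : ∀ (k : ℕ) (h1 : 1 ≤ k) (hk : inR n k) (j : ℕ) (hj : j + 1 = k) (hjn : inR n j),
    Th.G.map (tg (a := ⟨j, hjn⟩) (b := ⟨k, hk⟩) (show j < k by omega)) ≫ il k h1 hk =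
      Th.G.map (sg (a := ⟨j, hjn⟩) (b := ⟨k, hk⟩) (show j < k by omega))
  ir_s : ∀ (k : ℕ) (h1 : 1 ≤ k) (hk : inR n k) (j : ℕ) (hj : j + 1 = k) (hjn : inR n j),
    Th.G.map (sg (a := ⟨j, hjn⟩) (b := ⟨k, hk⟩) (show j < k by omega)) ≫ ir k h1 hk =
      Th.G.map (tg (a := ⟨j, hjn⟩) (b := ⟨k, hk⟩) (show j < k by omega))
  ir_t : ∀ (k : ℕ) (h1 : 1 ≤ k) (hk : inR n k) (j : ℕ) (hj : j + 1 = k) (hjn : inR n j),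
    Th.G.map (tg (a := ⟨j, hjn⟩) (b := ⟨k, hk⟩) (show j < k by omega)) ≫ ir k h1 hk =
      Th.G.map (sg (a := ⟨j, hjn⟩) (b := ⟨k, hk⟩) (show j < k by omega))
  /-- the witnesses `k^l_k, k^r_k : D_k → D_{k-1}`, `2 ≤ k ≤ n`, relating the composite of a
  cell with its left (resp. right) inverse to an identity cell -/
  kl : ∀ (i j k : ℕ) (hi : i + 1 = j) (hj : j + 1 = k) (hk : inR n k) (hjn : inR n j),
    Th.D k hk ⟶ Th.D j hjn
  kl_s : ∀ (i j k : ℕ) (hi : i + 1 = j) (hj : j + 1 = k) (hk : inR n k) (hjn : inR n j)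
      (hin : inR n i),
    Th.G.map (sg (a := ⟨j, hjn⟩) (b := ⟨k, hk⟩) (show j < k by omega)) ≫ kl i j k hi hj hk hjn =
      s.idm i j hi hjn hin ≫ Th.G.map (sg (a := ⟨i, hin⟩) (b := ⟨j, hjn⟩) (show i < j by omega))
  kl_t : ∀ (i j k : ℕ) (hi : i + 1 = j) (hj : j + 1 = k) (hk : inR n k) (hjn : inR n j)
      (h1 : 1 ≤ j),
    ∃ u : cPt Th j h1 hjn ⟶ Th.D j hjn,
      cInclS Th j h1 hjn ≫ u = il j h1 hjn ∧
      cInclT Th j h1 hjn ≫ u = 𝟙 _ ∧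
      Th.G.map (tg (a := ⟨j, hjn⟩) (b := ⟨k, hk⟩) (show j < k by omega)) ≫ kl i j k hi hj hk hjn =
        s.c j h1 hjn ≫ u
  kr : ∀ (i j k : ℕ) (hi : i + 1 = j) (hj : j + 1 = k) (hk : inR n k) (hjn : inR n j),
    Th.D k hk ⟶ Th.D j hjn
  kr_s : ∀ (i j k : ℕ) (hi : i + 1 = j) (hj : j + 1 = k) (hk : inR n k) (hjn : inR n j)
      (hin : inR n i),
    Th.G.map (sg (a := ⟨j, hjn⟩) (b := ⟨k, hk⟩) (show j < k by omega)) ≫ kr i j k hi hj hk hjn =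
      s.idm i j hi hjn hin ≫ Th.G.map (tg (a := ⟨i, hin⟩) (b := ⟨j, hjn⟩) (show i < j by omega))
  kr_t : ∀ (i j k : ℕ) (hi : i + 1 = j) (hj : j + 1 = k) (hk : inR n k) (hjn : inR n j)
      (h1 : 1 ≤ j),
    ∃ u : cPt Th j h1 hjn ⟶ Th.D j hjn,
      cInclS Th j h1 hjn ≫ u = 𝟙 _ ∧
      cInclT Th j h1 hjn ≫ u = ir j h1 hjn ∧
      Th.G.map (tg (a := ⟨j, hjn⟩) (b := ⟨k, hk⟩) (show j < k by omega)) ≫ kr i j k hi hj hk hjn =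
        s.c j h1 hjn ≫ u
  /-- the witnesses in dimension `n + 1` (for finite `n`) become equations -/
  kl_top : ∀ (i j : ℕ) (hi : i + 1 = j) (hjn : inR n j) (hin : inR n i) (h1 : 1 ≤ j),
    ¬ inR n (j + 1) →
    ∃ u : cPt Th j h1 hjn ⟶ Th.D j hjn,
      cInclS Th j h1 hjn ≫ u = il j h1 hjn ∧
      cInclT Th j h1 hjn ≫ u = 𝟙 _ ∧
      s.idm i j hi hjn hin ≫ Th.G.map (sg (a := ⟨i, hin⟩) (b := ⟨j, hjn⟩) (show i < j by omega)) =
        s.c j h1 hjn ≫ u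
  kr_top : ∀ (i j : ℕ) (hi : i + 1 = j) (hjn : inR n j) (hin : inR n i) (h1 : 1 ≤ j),
    ¬ inR n (j + 1) →
    ∃ u : cPt Th j h1 hjn ⟶ Th.D j hjn,
      cInclS Th j h1 hjn ≫ u = 𝟙 _ ∧
      cInclT Th j h1 hjn ≫ u = ir j h1 hjn ∧
      s.idm i j hi hjn hin ≫ Th.G.map (tg (a := ⟨i, hin⟩) (b := ⟨j, hjn⟩) (show i < j by omega)) =
        s.c j h1 hjn ≫ u

/-- A theory morphism maps a chosen system of compositions and identities to another. -/
def MapsSysCI {A B : GlobTheory n} (φ : TheoryHom A B) (sA : SysCI A) (sB : SysCI B) :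
    Prop :=
  (∀ (k : ℕ) (h1 : 1 ≤ k) (hk : inR n k),
    φ.H.map (sA.c k h1 hk) =
      eqToHom (Functor.congr_obj φ.comm ⟨k, hk⟩) ≫ sB.c k h1 hk ≫
        eqToHom (φ.sum_obj (pairTab k h1 hk)).symm) ∧
  (∀ (k k' : ℕ) (hk' : k + 1 = k') (hn : inR n k') (hkn : inR n k),
    φ.H.map (sA.idm k k' hk' hn hkn) =
      eqToHom (Functor.congr_obj φ.comm ⟨k', hn⟩) ≫ sB.idm k k' hk' hn hkn ≫
        eqToHom (Functor.congr_obj φ.comm ⟨k, hkn⟩).symm) ∧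
  (∀ (i j k : ℕ) (hi : i + 1 = j) (hj : j + 1 = k) (hk : inR n k) (hjn : inR n j),
    φ.H.map (sA.lu i j k hi hj hk hjn) =
      eqToHom (Functor.congr_obj φ.comm ⟨k, hk⟩) ≫ sB.lu i j k hi hj hk hjn ≫
        eqToHom (Functor.congr_obj φ.comm ⟨j, hjn⟩).symm) ∧
  (∀ (i j k : ℕ) (hi : i + 1 = j) (hj : j + 1 = k) (hk : inR n k) (hjn : inR n j),
    φ.H.map (sA.ru i j k hi hj hk hjn) =
      eqToHom (Functor.congr_obj φ.comm ⟨k, hk⟩) ≫ sB.ru i j k hi hj hk hjn ≫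
        eqToHom (Functor.congr_obj φ.comm ⟨j, hjn⟩).symm)

/-- A theory morphism maps a chosen system of inverses to another. -/
def MapsSysInv {A B : GlobTheory n} (φ : TheoryHom A B) {sA : SysCI A} {sB : SysCI B}
    (iA : SysInv A sA) (iB : SysInv B sB) : Prop :=
  (∀ (k : ℕ) (h1 : 1 ≤ k) (hk : inR n k),
    φ.H.map (iA.il k h1 hk) =
      eqToHom (Functor.congr_obj φ.comm ⟨k, hk⟩) ≫ iB.il k h1 hk ≫
        eqToHom (Functor.congr_obj φ.comm ⟨k, hk⟩).symm) ∧
  (∀ (k : ℕ) (h1 : 1 ≤ k) (hk : inR n k),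
    φ.H.map (iA.ir k h1 hk) =
      eqToHom (Functor.congr_obj φ.comm ⟨k, hk⟩) ≫ iB.ir k h1 hk ≫
        eqToHom (Functor.congr_obj φ.comm ⟨k, hk⟩).symm) ∧
  (∀ (i j k : ℕ) (hi : i + 1 = j) (hj : j + 1 = k) (hk : inR n k) (hjn : inR n j),
    φ.H.map (iA.kl i j k hi hj hk hjn) =
      eqToHom (Functor.congr_obj φ.comm ⟨k, hk⟩) ≫ iB.kl i j k hi hj hk hjn ≫
        eqToHom (Functor.congr_obj φ.comm ⟨j, hjn⟩).symm) ∧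
  (∀ (i j k : ℕ) (hi : i + 1 = j) (hj : j + 1 = k) (hk : inR n k) (hjn : inR n j),
    φ.H.map (iA.kr i j k hi hj hk hjn) =
      eqToHom (Functor.congr_obj φ.comm ⟨k, hk⟩) ≫ iB.kr i j k hi hj hk hjn ≫
        eqToHom (Functor.congr_obj φ.comm ⟨j, hjn⟩).symm)

/-- `ι : C → CW`, together with a transported system of compositions/identities `sW` and a
system of inverses `iW`, exhibits `CW` as the theory `C^W`: the pushout of `C` and the free
theory on a system of compositions, identities, and left and right inverses, along the free
theory on a system of compositions and identities.  By the universal properties of the free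
theories, this pushout is characterized by: morphisms `CW → D` correspond bijectively to
morphisms `C → D` together with a system of inverses on `D` relative to the transported
compositions and identities. -/
def IsWClosure {Cth CW : GlobTheory n} (ι : TheoryHom Cth CW) (sC : SysCI Cth)
    (sW : SysCI CW) (iW : SysInv CW sW) : Prop :=
  MapsSysCI ι sC sW ∧
  ∀ (D : GlobTheory n) (H : TheoryHom Cth D) (sD : SysCI D) (iD : SysInv D sD),
    MapsSysCI H sC sD →
    ∃! K : TheoryHom CW D, ι.comp K = H ∧ MapsSysCI K sW sD ∧ MapsSysInv K iW iD
/-! ## Composition and identity of cells in a model; the models `𝕀_k` -/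

/-- The codimension-1 boundary globe of a globe. -/
def mid1 (j : Gle n) (h1 : 1 ≤ j.val) : Gle n :=
  ⟨j.val - 1, le_trans (Nat.cast_le.mpr (Nat.sub_le _ _)) j.isLe⟩

/-- Binary composition of cells of a model, using a chosen system of compositions. -/
noncomputable def pairCell {Th : GlobTheory n} (s : SysCI Th) (X : Mod Th)
    {j : Gle n} (h1 : 1 ≤ j.val) (a b : cl X j)
    (hab : csrc (a := mid1 j h1) (b := j) (show j.val - 1 < j.val by omega) a =
      ctgt (a := mid1 j h1) (b := j) (show j.val - 1 < j.val by omega) b) : cl X j :=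
  X.obj.map (op (s.c j.val h1 j.isLe))
    ((X.property (pairTab j.val h1 j.isLe) (a, b) ⟨hab, trivial⟩).choose)

/-- The identity cell on a cell of codimension 1, via a chosen system of identities. -/
def idCell1 {Th : GlobTheory n} (s : SysCI Th) (X : Mod Th) {j : Gle n} (h1 : 1 ≤ j.val)
    (x : cl X (mid1 j h1)) : cl X j :=
  X.obj.map (op (s.idm (j.val - 1) j.val (by omega) j.isLe
    (le_trans (Nat.cast_le.mpr (Nat.sub_le _ _)) j.isLe))) x

/-- The generating data of the model `𝕀_j`: a `j`-cell `f`, two `j`-cells `g, k` in the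
opposite direction, and two `(j+1)`-cells relating (via the chosen compositions and
identities) the composite of `f` with `g`, and of `k` with `f`, to identity cells. -/
structure InvWitness {Th : GlobTheory n} (s : SysCI Th) (X : Mod Th) (j k : Gle n)
    (h1 : 1 ≤ j.val) (hjk : j.val + 1 = k.val) where
  f : cl X j
  g : cl X j
  kk : cl X j
  e1 : csrc (a := mid1 j h1) (show j.val - 1 < j.val by omega) g =
    ctgt (a := mid1 j h1) (show j.val - 1 < j.val by omega) f
  e2 : ctgt (a := mid1 j h1) (show j.val - 1 < j.val by omega) g =
    csrc (a := mid1 j h1) (show j.val - 1 < j.val by omega) f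
  e3 : csrc (a := mid1 j h1) (show j.val - 1 < j.val by omega) kk =
    ctgt (a := mid1 j h1) (show j.val - 1 < j.val by omega) f
  e4 : ctgt (a := mid1 j h1) (show j.val - 1 < j.val by omega) kk =
    csrc (a := mid1 j h1) (show j.val - 1 < j.val by omega) f
  H₁ : cl X k
  H₂ : cl X k
  h1s : csrc (show j.val < k.val by omega) H₁ = pairCell s X h1 f g e2.symm
  h1t : ctgt (show j.val < k.val by omega) H₁ =
    idCell1 s X h1 (csrc (a := mid1 j h1) (show j.val - 1 < j.val by omega) g)
  h2s : csrc (show j.val < k.val by omega) H₂ = pairCell s X h1 kk f e3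
  h2t : ctgt (show j.val < k.val by omega) H₂ =
    idCell1 s X h1 (csrc (a := mid1 j h1) (show j.val - 1 < j.val by omega) f)

/-- `I` (with its witness `w`) is the model `𝕀_j` freely generated by the data of an
`InvWitness`. -/
def IsFreeInv {Th : GlobTheory n} (s : SysCI Th) (I : Mod Th) {j k : Gle n}
    {h1 : 1 ≤ j.val} {hjk : j.val + 1 = k.val} (w : InvWitness s I j k h1 hjk) : Prop :=
  ∀ (Y : Mod Th) (w' : InvWitness s Y j k h1 hjk),
    ∃! φ : I ⟶ Y, fapp φ j w.f = w'.f ∧ fapp φ j w.g = w'.g ∧ fapp φ j w.kk = w'.kk ∧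
      fapp φ k w.H₁ = w'.H₁ ∧ fapp φ k w.H₂ = w'.H₂

/-- The map `α_j : D_j → 𝕀_j` selecting the generating cell `f`. -/
noncomputable def invIncl {Th : GlobTheory n} (s : SysCI Th) {I : Mod Th} {j k : Gle n}
    {h1 : 1 ≤ j.val} {hjk : j.val + 1 = k.val} (w : InvWitness s I j k h1 hjk) :
    dMod Th j ⟶ I :=
  yonedaEquiv.symm w.f

/-- The index family for the generating maps `α_k : D_k → 𝕀_k` (`k ≥ 1`). -/
structure AlphaIdx (Th : GlobTheory n) (s : SysCI Th) where
  j : Gle n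
  k : Gle n
  h1 : 1 ≤ j.val
  hjk : j.val + 1 = k.val
  I : Mod Th
  w : InvWitness s I j k h1 hjk
  free : IsFreeInv s I w

/-- The family `α_k : D_k → 𝕀_k`. -/
noncomputable def alphaGen (Th : GlobTheory n) (s : SysCI Th) (x : AlphaIdx Th s) :
    dMod Th x.j ⟶ x.I :=
  invIncl s x.w

/-! ## Transfinite composites of pushouts of a family of maps -/

theorem ord_lt_succ (o : Ordinal) : o < o + 1 := by
  rw [Ordinal.add_one_eq_succ]
  exact Order.lt_succ o

universe w

/-- A presentation of `f : X ⟶ Y` as a transfinite composite of pushouts of the maps of the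
family `gen`. -/
structure CellPres {M : Type*} [Category M] {ι : Type*} {Ai Bi : ι → M}
    (gen : ∀ i : ι, Ai i ⟶ Bi i) {X Y : M} (f : X ⟶ Y) where
  len : Ordinal.{w}
  F : ∀ o : Ordinal, o ≤ len → M
  mp : ∀ (o o' : Ordinal) (ho : o ≤ o') (h' : o' ≤ len), F o (ho.trans h') ⟶ F o' h'
  mp_id : ∀ (o : Ordinal) (h : o ≤ len), mp o o le_rfl h = 𝟙 _
  mp_comp : ∀ (o₁ o₂ o₃ : Ordinal) (h12 : o₁ ≤ o₂) (h23 : o₂ ≤ o₃) (h3 : o₃ ≤ len),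
    mp o₁ o₃ (h12.trans h23) h3 = mp o₁ o₂ h12 (h23.trans h3) ≫ mp o₂ o₃ h23 h3
  bot : F 0 zero_le = X
  /-- each successor step is a pushout of one of the generating maps -/
  succ : ∀ (o : Ordinal) (h : o + 1 ≤ len),
    ∃ (i : ι) (u : Ai i ⟶ F o ((ord_lt_succ o).le.trans h)) (v : Bi i ⟶ F (o + 1) h),
      IsPushout (gen i) u v (mp o (o + 1) (ord_lt_succ o).le h)
  /-- at limit stages the chain is colimiting -/
  limit : ∀ (o : Ordinal) (ho : o ≤ len), Order.IsSuccLimit o →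
    ∀ (Z : M) (legs : ∀ (o' : Ordinal) (h' : o' < o), F o' (h'.le.trans ho) ⟶ Z),
      (∀ (o₁ o₂ : Ordinal) (h12 : o₁ ≤ o₂) (h2 : o₂ < o),
        mp o₁ o₂ h12 (h2.le.trans ho) ≫ legs o₂ h2 = legs o₁ (lt_of_le_of_lt h12 h2)) →
      ∃! w : F o ho ⟶ Z, ∀ (o' : Ordinal) (h' : o' < o),
        mp o' o h'.le ho ≫ w = legs o' h'
  topEq : F len le_rfl = Y
  comp_eq : eqToHom bot.symm ≫ mp 0 len zero_le le_rfl ≫ eqToHom topEq = f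
/-! ## Auxiliary machinery for Statement 15 -/

attribute [reducible] GlobTheory.D cellP cl

section S15Aux

variable {n : ℕ∞} {CW : GlobTheory n}

/-- Contravariant action of a morphism of the theory on the cells of a model. -/
private def acm (X : Mod CW) {A A' : CW.E} (f : A ⟶ A') :
    X.obj.obj (op A') → X.obj.obj (op A) :=
  X.obj.map f.op

private lemma acm_comp (X : Mod CW) {A A' A'' : CW.E} (f : A ⟶ A') (g : A' ⟶ A'')
    (x : X.obj.obj (op A'')) : acm X (f ≫ g) x = acm X f (acm X g x) := by
  show X.obj.map (f ≫ g).op x = X.obj.map f.op (X.obj.map g.op x)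
  rw [op_comp, FunctorToTypes.map_comp_apply]

private lemma acm_id (X : Mod CW) {A : CW.E} (x : X.obj.obj (op A)) :
    acm X (𝟙 A) x = x := by
  show X.obj.map (𝟙 A).op x = x
  rw [op_id, FunctorToTypes.map_id_apply]

private lemma acm_nat {X Y : Mod CW} (φ : X ⟶ Y) {A A' : CW.E} (f : A ⟶ A')
    (x : X.obj.obj (op A')) :
    φ.app (op A) (acm X f x) = acm Y f (φ.app (op A') x) := by
  exact NatTrans.naturality_apply (φ := φ) f.op x

private lemma inR_mono {jv kv : ℕ} (h : jv ≤ kv) (hk : inR n kv) : inR n jv :=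
  le_trans (Nat.cast_le.mpr h) hk

/-- The cosource map between globes, with explicit proofs. -/
private def sgm (CW : GlobTheory n) {jv kv : ℕ} (h : jv < kv) (hjn : inR n jv)
    (hkn : inR n kv) : CW.G.obj ⟨jv, hjn⟩ ⟶ CW.G.obj ⟨kv, hkn⟩ :=
  CW.G.map (sg h)

/-- The cotarget map between globes, with explicit proofs. -/
private def tgm (CW : GlobTheory n) {jv kv : ℕ} (h : jv < kv) (hjn : inR n jv)
    (hkn : inR n kv) : CW.G.obj ⟨jv, hjn⟩ ⟶ CW.G.obj ⟨kv, hkn⟩ :=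
  CW.G.map (tg h)

/-- Gluing a pair of `k`-cells along a matching `(k-1)`-boundary: existence and
uniqueness of the corresponding cell of shape `D_k ⨿_{D_{k-1}} D_k`. -/
private lemma glue15 (X : Mod CW) (jv : ℕ) (h1 : 1 ≤ jv + 1) (hjn : inR n jv)
    (hkn : inR n (jv + 1)) (hlt : jv < jv + 1)
    (u v : cl X ⟨jv + 1, hkn⟩)
    (huv : acm X (sgm CW hlt hjn hkn) u = acm X (tgm CW hlt hjn hkn) v) :
    ∃ y : X.obj.obj (op (cPt CW (jv + 1) h1 hkn)),
      (acm X (cInclS CW (jv + 1) h1 hkn) y = u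
        ∧ acm X (cInclT CW (jv + 1) h1 hkn) y = v)
      ∧ ∀ y', acm X (cInclS CW (jv + 1) h1 hkn) y' = u
          → acm X (cInclT CW (jv + 1) h1 hkn) y' = v → y' = y := by
  obtain ⟨y, hy, huniq⟩ :=
    X.property (pairTab (jv + 1) h1 hkn) (u, v) ⟨huv, trivial⟩
  refine ⟨y, ⟨congrArg Prod.fst hy, congrArg Prod.snd hy⟩, fun y' hS hT => huniq y' ?_⟩
  exact Prod.ext hS hT

end S15Aux

section S15Main

variable {n : ℕ∞} {CW : GlobTheory n}

set_option maxHeartbeats 1000000 in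
/-- The inductive step for Statement 15: the lifting property against `τ` in dimension
`(jv, jv+1)` follows from the lifting property against `σ` together with (in the non-top
case) the lifting property against `τ` one dimension higher. -/
private lemma step15 {E B : Mod CW}
    (sW : SysCI CW) (iW : SysInv CW sW) (p : E ⟶ B) (hp : InjJ p)
    (jv : ℕ) (hjn : inR n jv) (hkn : inR n (jv + 1))
    (a : cl E ⟨jv, hjn⟩) (c : cl B ⟨jv + 1, hkn⟩)
    (hc : ctgt (show jv < jv + 1 by omega) c = fapp p ⟨jv, hjn⟩ a) :
    ∃ e : cl E ⟨jv + 1, hkn⟩,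
      ctgt (show jv < jv + 1 by omega) e = a ∧ fapp p ⟨jv + 1, hkn⟩ e = c := by
  classical
  have h1 : 1 ≤ jv + 1 := by omega
  have hlt : jv < jv + 1 := by omega
  -- the basic level-(jv+1) operations
  have hc' : acm B (tgm CW hlt hjn hkn) c = fapp p ⟨jv, hjn⟩ a := hc
  -- Step 1: σ-face of `il c` is `p a`
  have hute : acm B (sgm CW hlt hjn hkn) (acm B (iW.il (jv + 1) h1 hkn) c)
      = fapp p ⟨jv, hjn⟩ a := by
    erw [← acm_comp]
    exact (congrFun (congrArg (acm B) (iW.il_s (jv + 1) h1 hkn jv rfl hjn)) c).trans hc'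
  -- Step 2: lift `il c` along `σ` with source `a`
  obtain ⟨e₁, he₁s, he₁p⟩ :=
    hp ⟨jv, hjn⟩ ⟨jv + 1, hkn⟩ rfl a (acm B (iW.il (jv + 1) h1 hkn) c) hute
  have he₁s' : acm E (sgm CW hlt hjn hkn) e₁ = a := he₁s
  have he₁p' : fapp p ⟨jv + 1, hkn⟩ e₁ = acm B (iW.il (jv + 1) h1 hkn) c := he₁p
  -- Step 3: lift `c` itself along `σ`, with source `b₁ := τ e₁`
  have hxc : acm B (sgm CW hlt hjn hkn) c
      = fapp p ⟨jv, hjn⟩ (acm E (tgm CW hlt hjn hkn) e₁) := by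
    calc acm B (sgm CW hlt hjn hkn) c
        = acm B (tgm CW hlt hjn hkn) (acm B (iW.il (jv + 1) h1 hkn) c) := by
          erw [← acm_comp]
          exact (congrFun (congrArg (acm B) (iW.il_t (jv + 1) h1 hkn jv rfl hjn)) c).symm
      _ = acm B (tgm CW hlt hjn hkn) (fapp p ⟨jv + 1, hkn⟩ e₁) := by rw [he₁p']
      _ = fapp p ⟨jv, hjn⟩ (acm E (tgm CW hlt hjn hkn) e₁) :=
          (acm_nat p (tgm CW hlt hjn hkn) e₁).symm
  obtain ⟨xh, hxs, hxp⟩ :=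
    hp ⟨jv, hjn⟩ ⟨jv + 1, hkn⟩ rfl (acm E (tgm CW hlt hjn hkn) e₁) c hxc
  have hxs' : acm E (sgm CW hlt hjn hkn) xh = acm E (tgm CW hlt hjn hkn) e₁ := hxs
  have hxp' : fapp p ⟨jv + 1, hkn⟩ xh = c := hxp
  -- Step 4: glue `(il e₁, il xh)` in `E`
  have hglueE : acm E (sgm CW hlt hjn hkn) (acm E (iW.il (jv + 1) h1 hkn) e₁)
      = acm E (tgm CW hlt hjn hkn) (acm E (iW.il (jv + 1) h1 hkn) xh) := by
    erw [← acm_comp, ← acm_comp]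
    refine (congrFun (congrArg (acm E) (iW.il_s (jv + 1) h1 hkn jv rfl hjn)) e₁).trans ?_
    exact hxs'.symm.trans
      (congrFun (congrArg (acm E) (iW.il_t (jv + 1) h1 hkn jv rfl hjn)) xh).symm
  obtain ⟨yE, ⟨hyES, hyET⟩, hyEuniq⟩ :=
    glue15 E jv h1 hjn hkn hlt (acm E (iW.il (jv + 1) h1 hkn) e₁)
      (acm E (iW.il (jv + 1) h1 hkn) xh) hglueE
  -- Step 5: the composite `R := c_k (il e₁, il xh)` and its faces
  have hRσ : acm E (sgm CW hlt hjn hkn) (acm E (sW.c (jv + 1) h1 hkn) yE)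
      = acm E (tgm CW hlt hjn hkn) xh := by
    erw [← acm_comp]
    calc acm E (sgm CW hlt hjn hkn ≫ sW.c (jv + 1) h1 hkn) yE
        = acm E (sgm CW hlt hjn hkn) (acm E (cInclT CW (jv + 1) h1 hkn) yE) :=
          (congrFun (congrArg (acm E) (sW.c_s (jv + 1) h1 hkn jv rfl hjn)) yE).trans
            (acm_comp E _ _ yE)
      _ = acm E (sgm CW hlt hjn hkn) (acm E (iW.il (jv + 1) h1 hkn) xh) := by rw [hyET]
      _ = acm E (tgm CW hlt hjn hkn) xh := by
          erw [← acm_comp]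
          exact congrFun (congrArg (acm E) (iW.il_s (jv + 1) h1 hkn jv rfl hjn)) xh
  have hRτ : acm E (tgm CW hlt hjn hkn) (acm E (sW.c (jv + 1) h1 hkn) yE) = a := by
    erw [← acm_comp]
    calc acm E (tgm CW hlt hjn hkn ≫ sW.c (jv + 1) h1 hkn) yE
        = acm E (tgm CW hlt hjn hkn) (acm E (cInclS CW (jv + 1) h1 hkn) yE) :=
          (congrFun (congrArg (acm E) (sW.c_t (jv + 1) h1 hkn jv rfl hjn)) yE).trans
            (acm_comp E _ _ yE)
      _ = acm E (tgm CW hlt hjn hkn) (acm E (iW.il (jv + 1) h1 hkn) e₁) := by rw [hyES]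
      _ = acm E (sgm CW hlt hjn hkn) e₁ := by
          erw [← acm_comp]
          exact congrFun (congrArg (acm E) (iW.il_t (jv + 1) h1 hkn jv rfl hjn)) e₁
      _ = a := he₁s'
  -- Step 6: the B-side glue of `(il (il c), il c)` and transport of `yE` along `p`
  have hglueB : acm B (sgm CW hlt hjn hkn)
        (acm B (iW.il (jv + 1) h1 hkn) (acm B (iW.il (jv + 1) h1 hkn) c))
      = acm B (tgm CW hlt hjn hkn) (acm B (iW.il (jv + 1) h1 hkn) c) := by
    calc acm B (sgm CW hlt hjn hkn)
          (acm B (iW.il (jv + 1) h1 hkn) (acm B (iW.il (jv + 1) h1 hkn) c))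
        = acm B (sgm CW hlt hjn hkn ≫ iW.il (jv + 1) h1 hkn)
            (acm B (iW.il (jv + 1) h1 hkn) c) := (acm_comp B _ _ _).symm
      _ = acm B (tgm CW hlt hjn hkn) (acm B (iW.il (jv + 1) h1 hkn) c) :=
          congrFun (congrArg (acm B) (iW.il_s (jv + 1) h1 hkn jv rfl hjn)) _
  obtain ⟨yB, ⟨hyBS, hyBT⟩, hyBuniq⟩ :=
    glue15 B jv h1 hjn hkn hlt
      (acm B (iW.il (jv + 1) h1 hkn) (acm B (iW.il (jv + 1) h1 hkn) c))
      (acm B (iW.il (jv + 1) h1 hkn) c) hglueB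
  have hpyE : p.app (op (cPt CW (jv + 1) h1 hkn)) yE = yB := by
    refine hyBuniq _ ?_ ?_
    · calc acm B (cInclS CW (jv + 1) h1 hkn) (p.app (op (cPt CW (jv + 1) h1 hkn)) yE)
          = p.app _ (acm E (cInclS CW (jv + 1) h1 hkn) yE) :=
            (acm_nat p (cInclS CW (jv + 1) h1 hkn) yE).symm
        _ = p.app _ (acm E (iW.il (jv + 1) h1 hkn) e₁) := by rw [hyES]
        _ = acm B (iW.il (jv + 1) h1 hkn) (fapp p ⟨jv + 1, hkn⟩ e₁) :=
            acm_nat p (iW.il (jv + 1) h1 hkn) e₁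
        _ = acm B (iW.il (jv + 1) h1 hkn) (acm B (iW.il (jv + 1) h1 hkn) c) := by rw [he₁p']
    · calc acm B (cInclT CW (jv + 1) h1 hkn) (p.app (op (cPt CW (jv + 1) h1 hkn)) yE)
          = p.app _ (acm E (cInclT CW (jv + 1) h1 hkn) yE) :=
            (acm_nat p (cInclT CW (jv + 1) h1 hkn) yE).symm
        _ = p.app _ (acm E (iW.il (jv + 1) h1 hkn) xh) := by rw [hyET]
        _ = acm B (iW.il (jv + 1) h1 hkn) (fapp p ⟨jv + 1, hkn⟩ xh) :=
            acm_nat p (iW.il (jv + 1) h1 hkn) xh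
        _ = acm B (iW.il (jv + 1) h1 hkn) c := by rw [hxp']
  have hpR : fapp p ⟨jv + 1, hkn⟩ (acm E (sW.c (jv + 1) h1 hkn) yE)
      = acm B (sW.c (jv + 1) h1 hkn) yB := by
    calc fapp p ⟨jv + 1, hkn⟩ (acm E (sW.c (jv + 1) h1 hkn) yE)
        = acm B (sW.c (jv + 1) h1 hkn) (p.app (op (cPt CW (jv + 1) h1 hkn)) yE) :=
          acm_nat p (sW.c (jv + 1) h1 hkn) yE
      _ = acm B (sW.c (jv + 1) h1 hkn) yB := by rw [hpyE]
  -- Step 7: the B-side glue of `(id (p a), c)` (used in both branches)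
  have hglueB2 : acm B (sgm CW hlt hjn hkn)
        (acm B (sW.idm jv (jv + 1) rfl hkn hjn) (fapp p ⟨jv, hjn⟩ a))
      = acm B (tgm CW hlt hjn hkn) c := by
    erw [← acm_comp]
    refine (congrFun (congrArg (acm B) (sW.idm_s jv (jv + 1) rfl hkn hjn))
      (fapp p ⟨jv, hjn⟩ a)).trans ?_
    exact (acm_id B _).trans hc'.symm
  obtain ⟨yB₂, ⟨hyB2S, hyB2T⟩, hyB2uniq⟩ :=
    glue15 B jv h1 hjn hkn hlt
      (acm B (sW.idm jv (jv + 1) rfl hkn hjn) (fapp p ⟨jv, hjn⟩ a)) c hglueB2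
  by_cases hK : inR n (jv + 1 + 1)
  · -- Non-top case: correct the lift using a homotopy one dimension higher.
    have h1K : (1 : ℕ) ≤ jv + 1 + 1 := by omega
    have hltK : jv + 1 < jv + 1 + 1 := by omega
    obtain ⟨uu, huuS, huuT, huuE⟩ := iW.kl_t jv (jv + 1) (jv + 1 + 1) rfl rfl hK hkn h1
    have hBuu : acm B uu (acm B (iW.il (jv + 1) h1 hkn) c) = yB := by
      refine hyBuniq _ ?_ ?_
      · calc acm B (cInclS CW (jv + 1) h1 hkn) (acm B uu (acm B (iW.il (jv + 1) h1 hkn) c))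
            = acm B (cInclS CW (jv + 1) h1 hkn ≫ uu) (acm B (iW.il (jv + 1) h1 hkn) c) :=
              (acm_comp B _ _ _).symm
          _ = acm B (iW.il (jv + 1) h1 hkn) (acm B (iW.il (jv + 1) h1 hkn) c) := by rw [huuS]
      · calc acm B (cInclT CW (jv + 1) h1 hkn) (acm B uu (acm B (iW.il (jv + 1) h1 hkn) c))
            = acm B (cInclT CW (jv + 1) h1 hkn ≫ uu) (acm B (iW.il (jv + 1) h1 hkn) c) :=
              (acm_comp B _ _ _).symm
          _ = acm B (𝟙 (CW.D (jv + 1) hkn)) (acm B (iW.il (jv + 1) h1 hkn) c) := by rw [huuT]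
          _ = acm B (iW.il (jv + 1) h1 hkn) c := acm_id B _
    have hτθ : acm B (tgm CW hltK hkn hK)
        (acm B (iW.kl jv (jv + 1) (jv + 1 + 1) rfl rfl hK hkn)
          (acm B (iW.il (jv + 1) h1 hkn) c))
        = fapp p ⟨jv + 1, hkn⟩ (acm E (sW.c (jv + 1) h1 hkn) yE) := by
      calc acm B (tgm CW hltK hkn hK)
            (acm B (iW.kl jv (jv + 1) (jv + 1 + 1) rfl rfl hK hkn)
              (acm B (iW.il (jv + 1) h1 hkn) c))
          = acm B (tgm CW hltK hkn hK ≫ iW.kl jv (jv + 1) (jv + 1 + 1) rfl rfl hK hkn)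
              (acm B (iW.il (jv + 1) h1 hkn) c) := (acm_comp B _ _ _).symm
        _ = acm B (sW.c (jv + 1) h1 hkn ≫ uu) (acm B (iW.il (jv + 1) h1 hkn) c) :=
            congrFun (congrArg (acm B) huuE) _
        _ = acm B (sW.c (jv + 1) h1 hkn) (acm B uu (acm B (iW.il (jv + 1) h1 hkn) c)) :=
            acm_comp B _ _ _
        _ = acm B (sW.c (jv + 1) h1 hkn) yB := by rw [hBuu]
        _ = fapp p ⟨jv + 1, hkn⟩ (acm E (sW.c (jv + 1) h1 hkn) yE) := hpR.symm
    have hglob1 : sgm CW hlt hjn hkn ≫ sgm CW hltK hkn hK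
        = sgm CW hlt hjn hkn ≫ tgm CW hltK hkn hK := by
      show CW.G.map _ ≫ CW.G.map _ = CW.G.map _ ≫ CW.G.map _
      rw [← CW.G.map_comp, ← CW.G.map_comp]
      rfl
    have hglob2 : tgm CW hlt hjn hkn ≫ sgm CW hltK hkn hK
        = tgm CW hlt hjn hkn ≫ tgm CW hltK hkn hK := by
      show CW.G.map _ ≫ CW.G.map _ = CW.G.map _ ≫ CW.G.map _
      rw [← CW.G.map_comp, ← CW.G.map_comp]
      rfl
    -- Reverse the `kl`-witness homotopy and lift it along `σ` with prescribed source `R`;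
    -- its target is then a lift of the identity cell with both of its faces prescribed.
    have hσθ' : acm B (sgm CW hltK hkn hK)
        (acm B (iW.il (jv + 1 + 1) h1K hK)
          (acm B (iW.kl jv (jv + 1) (jv + 1 + 1) rfl rfl hK hkn)
            (acm B (iW.il (jv + 1) h1 hkn) c)))
        = fapp p ⟨jv + 1, hkn⟩ (acm E (sW.c (jv + 1) h1 hkn) yE) := by
      calc acm B (sgm CW hltK hkn hK)
            (acm B (iW.il (jv + 1 + 1) h1K hK)
              (acm B (iW.kl jv (jv + 1) (jv + 1 + 1) rfl rfl hK hkn)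
                (acm B (iW.il (jv + 1) h1 hkn) c)))
          = acm B (sgm CW hltK hkn hK ≫ iW.il (jv + 1 + 1) h1K hK)
              (acm B (iW.kl jv (jv + 1) (jv + 1 + 1) rfl rfl hK hkn)
                (acm B (iW.il (jv + 1) h1 hkn) c)) := (acm_comp B _ _ _).symm
        _ = acm B (tgm CW hltK hkn hK)
              (acm B (iW.kl jv (jv + 1) (jv + 1 + 1) rfl rfl hK hkn)
                (acm B (iW.il (jv + 1) h1 hkn) c)) :=
            congrFun (congrArg (acm B) (iW.il_s (jv + 1 + 1) h1K hK (jv + 1) rfl hkn)) _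
        _ = fapp p ⟨jv + 1, hkn⟩ (acm E (sW.c (jv + 1) h1 hkn) yE) := hτθ
    obtain ⟨Kψ, hKψs, hKψp⟩ := hp ⟨jv + 1, hkn⟩ ⟨jv + 1 + 1, hK⟩ rfl
      (acm E (sW.c (jv + 1) h1 hkn) yE)
      (acm B (iW.il (jv + 1 + 1) h1K hK)
        (acm B (iW.kl jv (jv + 1) (jv + 1 + 1) rfl rfl hK hkn)
          (acm B (iW.il (jv + 1) h1 hkn) c))) hσθ'
    have hKψs' : acm E (sgm CW hltK hkn hK) Kψ = acm E (sW.c (jv + 1) h1 hkn) yE := hKψs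
    have hKψp' : fapp p ⟨jv + 1 + 1, hK⟩ Kψ
        = acm B (iW.il (jv + 1 + 1) h1K hK)
            (acm B (iW.kl jv (jv + 1) (jv + 1 + 1) rfl rfl hK hkn)
              (acm B (iW.il (jv + 1) h1 hkn) c)) := hKψp
    have hψσ : acm E (sgm CW hlt hjn hkn) (acm E (tgm CW hltK hkn hK) Kψ)
        = acm E (tgm CW hlt hjn hkn) xh := by
      calc acm E (sgm CW hlt hjn hkn) (acm E (tgm CW hltK hkn hK) Kψ)
          = acm E (sgm CW hlt hjn hkn ≫ tgm CW hltK hkn hK) Kψ := (acm_comp E _ _ _).symm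
        _ = acm E (sgm CW hlt hjn hkn ≫ sgm CW hltK hkn hK) Kψ := by rw [← hglob1]
        _ = acm E (sgm CW hlt hjn hkn) (acm E (sgm CW hltK hkn hK) Kψ) := acm_comp E _ _ _
        _ = acm E (sgm CW hlt hjn hkn) (acm E (sW.c (jv + 1) h1 hkn) yE) := by rw [hKψs']
        _ = acm E (tgm CW hlt hjn hkn) xh := hRσ
    have hψτ : acm E (tgm CW hlt hjn hkn) (acm E (tgm CW hltK hkn hK) Kψ) = a := by
      calc acm E (tgm CW hlt hjn hkn) (acm E (tgm CW hltK hkn hK) Kψ)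
          = acm E (tgm CW hlt hjn hkn ≫ tgm CW hltK hkn hK) Kψ := (acm_comp E _ _ _).symm
        _ = acm E (tgm CW hlt hjn hkn ≫ sgm CW hltK hkn hK) Kψ := by rw [← hglob2]
        _ = acm E (tgm CW hlt hjn hkn) (acm E (sgm CW hltK hkn hK) Kψ) := acm_comp E _ _ _
        _ = acm E (tgm CW hlt hjn hkn) (acm E (sW.c (jv + 1) h1 hkn) yE) := by rw [hKψs']
        _ = a := hRτ
    have hψp : fapp p ⟨jv + 1, hkn⟩ (acm E (tgm CW hltK hkn hK) Kψ)
        = acm B (sW.idm jv (jv + 1) rfl hkn hjn) (fapp p ⟨jv, hjn⟩ a) := by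
      calc fapp p ⟨jv + 1, hkn⟩ (acm E (tgm CW hltK hkn hK) Kψ)
          = acm B (tgm CW hltK hkn hK) (fapp p ⟨jv + 1 + 1, hK⟩ Kψ) := acm_nat p _ Kψ
        _ = acm B (tgm CW hltK hkn hK)
              (acm B (iW.il (jv + 1 + 1) h1K hK)
                (acm B (iW.kl jv (jv + 1) (jv + 1 + 1) rfl rfl hK hkn)
                  (acm B (iW.il (jv + 1) h1 hkn) c))) := by rw [hKψp']
        _ = acm B (tgm CW hltK hkn hK ≫ iW.il (jv + 1 + 1) h1K hK)
              (acm B (iW.kl jv (jv + 1) (jv + 1 + 1) rfl rfl hK hkn)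
                (acm B (iW.il (jv + 1) h1 hkn) c)) := (acm_comp B _ _ _).symm
        _ = acm B (sgm CW hltK hkn hK)
              (acm B (iW.kl jv (jv + 1) (jv + 1 + 1) rfl rfl hK hkn)
                (acm B (iW.il (jv + 1) h1 hkn) c)) :=
            congrFun (congrArg (acm B) (iW.il_t (jv + 1 + 1) h1K hK (jv + 1) rfl hkn)) _
        _ = acm B (sgm CW hltK hkn hK ≫ iW.kl jv (jv + 1) (jv + 1 + 1) rfl rfl hK hkn)
              (acm B (iW.il (jv + 1) h1 hkn) c) := (acm_comp B _ _ _).symm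
        _ = acm B (sW.idm jv (jv + 1) rfl hkn hjn ≫ sgm CW hlt hjn hkn)
              (acm B (iW.il (jv + 1) h1 hkn) c) :=
            congrFun (congrArg (acm B)
              (iW.kl_s jv (jv + 1) (jv + 1 + 1) rfl rfl hK hkn hjn)) _
        _ = acm B (sW.idm jv (jv + 1) rfl hkn hjn)
              (acm B (sgm CW hlt hjn hkn) (acm B (iW.il (jv + 1) h1 hkn) c)) :=
            acm_comp B _ _ _
        _ = acm B (sW.idm jv (jv + 1) rfl hkn hjn) (fapp p ⟨jv, hjn⟩ a) := by rw [hute]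
    obtain ⟨yE₂, ⟨hy2S, hy2T⟩, _⟩ :=
      glue15 E jv h1 hjn hkn hlt (acm E (tgm CW hltK hkn hK) Kψ) xh hψσ
    have he2τ : acm E (tgm CW hlt hjn hkn) (acm E (sW.c (jv + 1) h1 hkn) yE₂) = a := by
      erw [← acm_comp]
      calc acm E (tgm CW hlt hjn hkn ≫ sW.c (jv + 1) h1 hkn) yE₂
          = acm E (tgm CW hlt hjn hkn) (acm E (cInclS CW (jv + 1) h1 hkn) yE₂) :=
            (congrFun (congrArg (acm E) (sW.c_t (jv + 1) h1 hkn jv rfl hjn)) yE₂).trans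
              (acm_comp E _ _ yE₂)
        _ = acm E (tgm CW hlt hjn hkn) (acm E (tgm CW hltK hkn hK) Kψ) := by rw [hy2S]
        _ = a := hψτ
    have hpyE₂ : p.app (op (cPt CW (jv + 1) h1 hkn)) yE₂ = yB₂ := by
      refine hyB2uniq _ ?_ ?_
      · calc acm B (cInclS CW (jv + 1) h1 hkn) (p.app (op (cPt CW (jv + 1) h1 hkn)) yE₂)
            = fapp p ⟨jv + 1, hkn⟩ (acm E (cInclS CW (jv + 1) h1 hkn) yE₂) :=
              (acm_nat p _ yE₂).symm
          _ = fapp p ⟨jv + 1, hkn⟩ (acm E (tgm CW hltK hkn hK) Kψ) := by rw [hy2S]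
          _ = acm B (sW.idm jv (jv + 1) rfl hkn hjn) (fapp p ⟨jv, hjn⟩ a) := hψp
      · calc acm B (cInclT CW (jv + 1) h1 hkn) (p.app (op (cPt CW (jv + 1) h1 hkn)) yE₂)
            = fapp p ⟨jv + 1, hkn⟩ (acm E (cInclT CW (jv + 1) h1 hkn) yE₂) :=
              (acm_nat p _ yE₂).symm
          _ = fapp p ⟨jv + 1, hkn⟩ xh := by rw [hy2T]
          _ = c := hxp'
    obtain ⟨uL, hLS, hLT, hLE⟩ := sW.lu_t jv (jv + 1) (jv + 1 + 1) rfl rfl hK hkn hjn h1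
    have hBuL : acm B uL c = yB₂ := by
      refine hyB2uniq _ ?_ ?_
      · calc acm B (cInclS CW (jv + 1) h1 hkn) (acm B uL c)
            = acm B (cInclS CW (jv + 1) h1 hkn ≫ uL) c := (acm_comp B _ _ _).symm
          _ = acm B (sW.idm jv (jv + 1) rfl hkn hjn ≫ tgm CW hlt hjn hkn) c :=
              congrFun (congrArg (acm B) hLS) c
          _ = acm B (sW.idm jv (jv + 1) rfl hkn hjn) (acm B (tgm CW hlt hjn hkn) c) :=
              acm_comp B _ _ _
          _ = acm B (sW.idm jv (jv + 1) rfl hkn hjn) (fapp p ⟨jv, hjn⟩ a) := by rw [hc']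
      · calc acm B (cInclT CW (jv + 1) h1 hkn) (acm B uL c)
            = acm B (cInclT CW (jv + 1) h1 hkn ≫ uL) c := (acm_comp B _ _ _).symm
          _ = acm B (𝟙 (CW.D (jv + 1) hkn)) c := by rw [hLT]
          _ = c := acm_id B c
    have hτW : acm B (tgm CW hltK hkn hK)
        (acm B (sW.lu jv (jv + 1) (jv + 1 + 1) rfl rfl hK hkn) c)
        = fapp p ⟨jv + 1, hkn⟩ (acm E (sW.c (jv + 1) h1 hkn) yE₂) := by
      calc acm B (tgm CW hltK hkn hK) (acm B (sW.lu jv (jv + 1) (jv + 1 + 1) rfl rfl hK hkn) c)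
          = acm B (tgm CW hltK hkn hK ≫ sW.lu jv (jv + 1) (jv + 1 + 1) rfl rfl hK hkn) c :=
            (acm_comp B _ _ _).symm
        _ = acm B (sW.c (jv + 1) h1 hkn ≫ uL) c := congrFun (congrArg (acm B) hLE) c
        _ = acm B (sW.c (jv + 1) h1 hkn) (acm B uL c) := acm_comp B _ _ _
        _ = acm B (sW.c (jv + 1) h1 hkn) yB₂ := by rw [hBuL]
        _ = acm B (sW.c (jv + 1) h1 hkn) (p.app (op (cPt CW (jv + 1) h1 hkn)) yE₂) := by
            rw [hpyE₂]
        _ = fapp p ⟨jv + 1, hkn⟩ (acm E (sW.c (jv + 1) h1 hkn) yE₂) :=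
            (acm_nat p (sW.c (jv + 1) h1 hkn) yE₂).symm
    have hσH : acm B (sgm CW hltK hkn hK)
        (acm B (iW.il (jv + 1 + 1) h1K hK)
          (acm B (sW.lu jv (jv + 1) (jv + 1 + 1) rfl rfl hK hkn) c))
        = fapp p ⟨jv + 1, hkn⟩ (acm E (sW.c (jv + 1) h1 hkn) yE₂) := by
      calc acm B (sgm CW hltK hkn hK)
            (acm B (iW.il (jv + 1 + 1) h1K hK)
              (acm B (sW.lu jv (jv + 1) (jv + 1 + 1) rfl rfl hK hkn) c))
          = acm B (sgm CW hltK hkn hK ≫ iW.il (jv + 1 + 1) h1K hK)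
              (acm B (sW.lu jv (jv + 1) (jv + 1 + 1) rfl rfl hK hkn) c) :=
            (acm_comp B _ _ _).symm
        _ = acm B (tgm CW hltK hkn hK)
              (acm B (sW.lu jv (jv + 1) (jv + 1 + 1) rfl rfl hK hkn) c) :=
            congrFun (congrArg (acm B) (iW.il_s (jv + 1 + 1) h1K hK (jv + 1) rfl hkn)) _
        _ = fapp p ⟨jv + 1, hkn⟩ (acm E (sW.c (jv + 1) h1 hkn) yE₂) := hτW
    obtain ⟨Kh, hKs, hKp⟩ := hp ⟨jv + 1, hkn⟩ ⟨jv + 1 + 1, hK⟩ rfl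
      (acm E (sW.c (jv + 1) h1 hkn) yE₂)
      (acm B (iW.il (jv + 1 + 1) h1K hK)
        (acm B (sW.lu jv (jv + 1) (jv + 1 + 1) rfl rfl hK hkn) c)) hσH
    have hKs' : acm E (sgm CW hltK hkn hK) Kh = acm E (sW.c (jv + 1) h1 hkn) yE₂ := hKs
    have hKp' : fapp p ⟨jv + 1 + 1, hK⟩ Kh
        = acm B (iW.il (jv + 1 + 1) h1K hK)
            (acm B (sW.lu jv (jv + 1) (jv + 1 + 1) rfl rfl hK hkn) c) := hKp
    refine ⟨acm E (tgm CW hltK hkn hK) Kh, ?_, ?_⟩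
    · show acm E (tgm CW hlt hjn hkn) (acm E (tgm CW hltK hkn hK) Kh) = a
      calc acm E (tgm CW hlt hjn hkn) (acm E (tgm CW hltK hkn hK) Kh)
          = acm E (tgm CW hlt hjn hkn ≫ tgm CW hltK hkn hK) Kh := (acm_comp E _ _ _).symm
        _ = acm E (tgm CW hlt hjn hkn ≫ sgm CW hltK hkn hK) Kh := by rw [← hglob2]
        _ = acm E (tgm CW hlt hjn hkn) (acm E (sgm CW hltK hkn hK) Kh) := acm_comp E _ _ _
        _ = acm E (tgm CW hlt hjn hkn) (acm E (sW.c (jv + 1) h1 hkn) yE₂) := by rw [hKs']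
        _ = a := he2τ
    · show fapp p ⟨jv + 1, hkn⟩ (acm E (tgm CW hltK hkn hK) Kh) = c
      calc fapp p ⟨jv + 1, hkn⟩ (acm E (tgm CW hltK hkn hK) Kh)
          = acm B (tgm CW hltK hkn hK) (fapp p ⟨jv + 1 + 1, hK⟩ Kh) := acm_nat p _ Kh
        _ = acm B (tgm CW hltK hkn hK)
              (acm B (iW.il (jv + 1 + 1) h1K hK)
                (acm B (sW.lu jv (jv + 1) (jv + 1 + 1) rfl rfl hK hkn) c)) := by rw [hKp']
        _ = acm B (tgm CW hltK hkn hK ≫ iW.il (jv + 1 + 1) h1K hK)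
              (acm B (sW.lu jv (jv + 1) (jv + 1 + 1) rfl rfl hK hkn) c) :=
            (acm_comp B _ _ _).symm
        _ = acm B (sgm CW hltK hkn hK)
              (acm B (sW.lu jv (jv + 1) (jv + 1 + 1) rfl rfl hK hkn) c) :=
            congrFun (congrArg (acm B) (iW.il_t (jv + 1 + 1) h1K hK (jv + 1) rfl hkn)) _
        _ = acm B (sgm CW hltK hkn hK ≫ sW.lu jv (jv + 1) (jv + 1 + 1) rfl rfl hK hkn) c :=
            (acm_comp B _ _ _).symm
        _ = acm B (𝟙 _) c :=
            congrFun (congrArg (acm B) (sW.lu_s jv (jv + 1) (jv + 1 + 1) rfl rfl hK hkn)) c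
        _ = c := acm_id B c
  · -- Top case: the strict unit and inverse laws hold on the nose.
    obtain ⟨uu, huuS, huuT, huuE⟩ := iW.kl_top jv (jv + 1) rfl hkn hjn h1 hK
    have hBuu : acm B uu (acm B (iW.il (jv + 1) h1 hkn) c) = yB := by
      refine hyBuniq _ ?_ ?_
      · calc acm B (cInclS CW (jv + 1) h1 hkn) (acm B uu (acm B (iW.il (jv + 1) h1 hkn) c))
            = acm B (cInclS CW (jv + 1) h1 hkn ≫ uu) (acm B (iW.il (jv + 1) h1 hkn) c) :=
              (acm_comp B _ _ _).symm
          _ = acm B (iW.il (jv + 1) h1 hkn) (acm B (iW.il (jv + 1) h1 hkn) c) := by rw [huuS]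
      · calc acm B (cInclT CW (jv + 1) h1 hkn) (acm B uu (acm B (iW.il (jv + 1) h1 hkn) c))
            = acm B (cInclT CW (jv + 1) h1 hkn ≫ uu) (acm B (iW.il (jv + 1) h1 hkn) c) :=
              (acm_comp B _ _ _).symm
          _ = acm B (𝟙 (CW.D (jv + 1) hkn)) (acm B (iW.il (jv + 1) h1 hkn) c) := by rw [huuT]
          _ = acm B (iW.il (jv + 1) h1 hkn) c := acm_id B _
    have hpRtop : acm B (sW.c (jv + 1) h1 hkn) yB
        = acm B (sW.idm jv (jv + 1) rfl hkn hjn) (fapp p ⟨jv, hjn⟩ a) := by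
      calc acm B (sW.c (jv + 1) h1 hkn) yB
          = acm B (sW.c (jv + 1) h1 hkn) (acm B uu (acm B (iW.il (jv + 1) h1 hkn) c)) := by
            rw [hBuu]
        _ = acm B (sW.c (jv + 1) h1 hkn ≫ uu) (acm B (iW.il (jv + 1) h1 hkn) c) :=
            (acm_comp B _ _ _).symm
        _ = acm B (sW.idm jv (jv + 1) rfl hkn hjn ≫ sgm CW hlt hjn hkn)
              (acm B (iW.il (jv + 1) h1 hkn) c) := (congrFun (congrArg (acm B) huuE) _).symm
        _ = acm B (sW.idm jv (jv + 1) rfl hkn hjn)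
              (acm B (sgm CW hlt hjn hkn) (acm B (iW.il (jv + 1) h1 hkn) c)) :=
            acm_comp B _ _ _
        _ = acm B (sW.idm jv (jv + 1) rfl hkn hjn) (fapp p ⟨jv, hjn⟩ a) := by rw [hute]
    obtain ⟨uL, hLS, hLT, hLE⟩ := sW.lu_top jv (jv + 1) rfl hkn hjn h1 hK
    have hBuL : acm B uL c = yB₂ := by
      refine hyB2uniq _ ?_ ?_
      · calc acm B (cInclS CW (jv + 1) h1 hkn) (acm B uL c)
            = acm B (cInclS CW (jv + 1) h1 hkn ≫ uL) c := (acm_comp B _ _ _).symm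
          _ = acm B (sW.idm jv (jv + 1) rfl hkn hjn ≫ tgm CW hlt hjn hkn) c :=
              congrFun (congrArg (acm B) hLS) c
          _ = acm B (sW.idm jv (jv + 1) rfl hkn hjn) (acm B (tgm CW hlt hjn hkn) c) :=
              acm_comp B _ _ _
          _ = acm B (sW.idm jv (jv + 1) rfl hkn hjn) (fapp p ⟨jv, hjn⟩ a) := by rw [hc']
      · calc acm B (cInclT CW (jv + 1) h1 hkn) (acm B uL c)
            = acm B (cInclT CW (jv + 1) h1 hkn ≫ uL) c := (acm_comp B _ _ _).symm
          _ = acm B (𝟙 (CW.D (jv + 1) hkn)) c := by rw [hLT]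
          _ = c := acm_id B c
    obtain ⟨yE₂, ⟨hy2S, hy2T⟩, _⟩ :=
      glue15 E jv h1 hjn hkn hlt (acm E (sW.c (jv + 1) h1 hkn) yE) xh hRσ
    have hpyE₂ : p.app (op (cPt CW (jv + 1) h1 hkn)) yE₂ = yB₂ := by
      refine hyB2uniq _ ?_ ?_
      · calc acm B (cInclS CW (jv + 1) h1 hkn) (p.app (op (cPt CW (jv + 1) h1 hkn)) yE₂)
            = fapp p ⟨jv + 1, hkn⟩ (acm E (cInclS CW (jv + 1) h1 hkn) yE₂) :=
              (acm_nat p _ yE₂).symm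
          _ = fapp p ⟨jv + 1, hkn⟩ (acm E (sW.c (jv + 1) h1 hkn) yE) := by rw [hy2S]
          _ = acm B (sW.c (jv + 1) h1 hkn) yB := hpR
          _ = acm B (sW.idm jv (jv + 1) rfl hkn hjn) (fapp p ⟨jv, hjn⟩ a) := hpRtop
      · calc acm B (cInclT CW (jv + 1) h1 hkn) (p.app (op (cPt CW (jv + 1) h1 hkn)) yE₂)
            = fapp p ⟨jv + 1, hkn⟩ (acm E (cInclT CW (jv + 1) h1 hkn) yE₂) :=
              (acm_nat p _ yE₂).symm
          _ = fapp p ⟨jv + 1, hkn⟩ xh := by rw [hy2T]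
          _ = c := hxp'
    refine ⟨acm E (sW.c (jv + 1) h1 hkn) yE₂, ?_, ?_⟩
    · show acm E (tgm CW hlt hjn hkn) (acm E (sW.c (jv + 1) h1 hkn) yE₂) = a
      erw [← acm_comp]
      calc acm E (tgm CW hlt hjn hkn ≫ sW.c (jv + 1) h1 hkn) yE₂
          = acm E (tgm CW hlt hjn hkn) (acm E (cInclS CW (jv + 1) h1 hkn) yE₂) :=
            (congrFun (congrArg (acm E) (sW.c_t (jv + 1) h1 hkn jv rfl hjn)) yE₂).trans
              (acm_comp E _ _ yE₂)
        _ = acm E (tgm CW hlt hjn hkn) (acm E (sW.c (jv + 1) h1 hkn) yE) := by rw [hy2S]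
        _ = a := hRτ
    · show fapp p ⟨jv + 1, hkn⟩ (acm E (sW.c (jv + 1) h1 hkn) yE₂) = c
      calc fapp p ⟨jv + 1, hkn⟩ (acm E (sW.c (jv + 1) h1 hkn) yE₂)
          = acm B (sW.c (jv + 1) h1 hkn) (p.app (op (cPt CW (jv + 1) h1 hkn)) yE₂) :=
            acm_nat p _ yE₂
        _ = acm B (sW.c (jv + 1) h1 hkn) yB₂ := by rw [hpyE₂]
        _ = acm B (sW.c (jv + 1) h1 hkn) (acm B uL c) := by rw [hBuL]
        _ = acm B (sW.c (jv + 1) h1 hkn ≫ uL) c := (acm_comp B _ _ _).symm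
        _ = acm B (𝟙 _) c := (congrFun (congrArg (acm B) hLE) c).symm
        _ = c := acm_id B c


end S15Main

/-! # Statement 15

Let `𝔠` be a coherator for `n`-categories.  Every fibration `p : E → B` in `Mod 𝔠^W` has
the right lifting property with respect to the target maps `τ_k : D_k → D_{k+1}`. -/

theorem statement15 {n : ℕ∞} (Cth : GlobTheory n) (hC : IsCatCoherator Cth)
    (sC : SysCI Cth) (CW : GlobTheory n) (ι : TheoryHom Cth CW)
    (sW : SysCI CW) (iW : SysInv CW sW) (hW : IsWClosure ι sC sW iW)
    {E B : Mod CW} (p : E ⟶ B) (hp : InjJ p) : InjJtau p := by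
  intro j k hj a c hc
  obtain ⟨jv, hjn⟩ := j
  obtain ⟨kv, hkn⟩ := k
  have hj' : jv + 1 = kv := hj
  subst hj'
  exact step15 sW iW p hp jv hjn hkn a c hc

end GPaper
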